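/- arXiv:cs/0407011 — 6 statements merged into one kernel-verified Lean document; each statement's English description precedes it below -/
import Mathlib

section
/- Let 0 < p < 1/2, ρ = √p/(√p+√(1−p)), δ₁ = 2ρ(1−ρ), and R₁ = R̄(δ₁). Then −A(δ₁) − R₁ + 1 − h(δ₁) = E₀(R₁,p), where E₀(R,p) = D(ρ‖p) + R_crit − R is the random coding exponent. -/
open Real

/-- Binary entropy function (base-2 logarithms). -/
noncomputable def H (x : ℝ) : ℝ := -(x * logb 2 x) - (1 - x) * logb 2 (1 - x)

/-- `A(ω) = ω log₂(2√(p(1−p)))`. -/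
noncomputable def Afun (p ω : ℝ) : ℝ := ω * logb 2 (2 * Real.sqrt (p * (1 - p)))

/-- Binary information divergence `D(x‖y)` (base-2 logarithms). -/
noncomputable def Dkl (x y : ℝ) : ℝ :=
  x * logb 2 (x / y) + (1 - x) * logb 2 ((1 - x) / (1 - y))

/-- `τ_ν(ξ) = (1/2)(1 − √(1 − 4(√(ν(1−ν) − ξ(1−ξ)) − ξ)²))`. -/
noncomputable def taunu (ν ξ : ℝ) : ℝ :=
  (1/2) * (1 - Real.sqrt (1 - 4 * (Real.sqrt (ν * (1 - ν) - ξ * (1 - ξ)) - ξ)^2))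

/-- `R̄(δ) = 1 + min_{(1/2)(1−√(1−2δ)) ≤ α ≤ 1/2} (h(τ_α(δ/2)) − h(α))`, the inverse of the
linear-programming bound on the relative distance. -/
noncomputable def Rbar (δ : ℝ) : ℝ :=
  1 + sInf ((fun α => H (taunu α (δ/2)) - H α) ''
    Set.Icc ((1/2) * (1 - Real.sqrt (1 - 2*δ))) (1/2))

/-- Let `0 < p < 1/2`, `ρ = √p/(√p+√(1−p))`, `δ₁ = 2ρ(1−ρ)`, and `R₁ = R̄(δ₁)`. Then
`−A(δ₁) − R₁ + 1 − h(δ₁) = E₀(R₁,p)`, where `E₀(R,p) = D(ρ‖p) + R_crit − R` is the random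
coding exponent and `R_crit = 1 − h(ρ)`. -/
theorem union_bound_tangent (p ρ δ₁ R₁ : ℝ) (hp : 0 < p) (hp' : p < 1/2)
    (hρ : ρ = Real.sqrt p / (Real.sqrt p + Real.sqrt (1 - p)))
    (hδ₁ : δ₁ = 2 * ρ * (1 - ρ)) (hR₁ : R₁ = Rbar δ₁) :
    -Afun p δ₁ - R₁ + 1 - H δ₁ = Dkl ρ p + (1 - H ρ) - R₁ := by
  have hp1 : (0:ℝ) < 1 - p := by linarith
  set s := Real.sqrt p with hsdef
  set t := Real.sqrt (1-p) with htdef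
  have hs : 0 < s := Real.sqrt_pos.mpr hp
  have ht : 0 < t := Real.sqrt_pos.mpr hp1
  have hs2 : s^2 = p := Real.sq_sqrt hp.le
  have ht2 : t^2 = 1 - p := Real.sq_sqrt hp1.le
  have hst : 0 < s + t := by positivity
  have hρ' : ρ = s / (s+t) := hρ
  have h1ρ : 1 - ρ = t / (s+t) := by rw [hρ']; field_simp; ring
  have hδ : δ₁ = 2*s*t / (s+t)^2 := by rw [hδ₁, hρ']; field_simp; ring
  have h1δ : 1 - δ₁ = ((s+t)^2)⁻¹ := by
    rw [hδ, inv_eq_one_div, eq_div_iff (by positivity)]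
    field_simp
    nlinarith [hs2, ht2]
  set a := logb 2 s with ha
  set b := logb 2 t with hb
  set c := logb 2 (s+t) with hc
  have l2 : logb 2 2 = 1 := by
    simp [Real.logb_self_eq_one]
  have lpow : logb 2 ((s+t)^2) = 2*c := by
    rw [Real.logb_pow]; push_cast; ring
  have lA : logb 2 (2 * Real.sqrt (p*(1-p))) = 1 + a + b := by
    rw [Real.sqrt_mul hp.le, ← hsdef, ← htdef,
        Real.logb_mul (by norm_num) (by positivity),
        Real.logb_mul (by positivity) (by positivity), l2]
    ring
  have lδ : logb 2 δ₁ = 1 + a + b - 2*c := by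
    rw [hδ, Real.logb_div (by positivity) (by positivity),
        Real.logb_mul (by positivity) (by positivity),
        Real.logb_mul (by norm_num) (by positivity), l2, lpow]
  have l1δ : logb 2 (1 - δ₁) = -(2*c) := by
    rw [h1δ, Real.logb_inv, lpow]
  have lρ : logb 2 ρ = a - c := by
    rw [hρ', Real.logb_div (by positivity) (by positivity)]
  have l1ρ : logb 2 (1-ρ) = b - c := by
    rw [h1ρ, Real.logb_div (by positivity) (by positivity)]
  have hρp : ρ / p = (s*(s+t))⁻¹ := by
    rw [hρ', ← hs2]; field_simp
  have h1ρp : (1-ρ) / (1-p) = (t*(s+t))⁻¹ := by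
    rw [h1ρ, ← ht2]; field_simp
  have lρp : logb 2 (ρ/p) = -a - c := by
    rw [hρp, Real.logb_inv, Real.logb_mul (by positivity) (by positivity)]
    ring
  have l1ρp : logb 2 ((1-ρ)/(1-p)) = -b - c := by
    rw [h1ρp, Real.logb_inv, Real.logb_mul (by positivity) (by positivity)]
    ring
  unfold Afun H Dkl
  rw [lA, lδ, l1δ, lρ, l1ρ, lρp, l1ρp]
  ring
end

section
/- For every p ∈ (0,1/2), with ρ = √p/(√p+√(1−p)) and δ₁ = 2ρ(1−ρ), the identity h(δ₁) + δ₁·log₂(2√(p(1−p))) = log₂(1 + 2√(p(1−p))) holds. -/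
open Real

/-- For every `p ∈ (0,1/2)`, with `ρ = √p/(√p+√(1−p))` and `δ₁ = 2ρ(1−ρ)`, the identity
`h(δ₁) + δ₁·log₂(2√(p(1−p))) = log₂(1 + 2√(p(1−p)))` holds. -/
theorem entropy_identity (p : ℝ) (hp : 0 < p) (hp' : p < 1/2)
    (ρ δ₁ : ℝ) (hρ : ρ = Real.sqrt p / (Real.sqrt p + Real.sqrt (1 - p)))
    (hδ₁ : δ₁ = 2 * ρ * (1 - ρ)) :
    H δ₁ + δ₁ * logb 2 (2 * Real.sqrt (p * (1 - p)))
      = logb 2 (1 + 2 * Real.sqrt (p * (1 - p))) := by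
  set s := Real.sqrt p with hs
  set t := Real.sqrt (1 - p) with ht
  have hp1 : 0 < 1 - p := by linarith
  have hs0 : 0 < s := Real.sqrt_pos.mpr hp
  have ht0 : 0 < t := Real.sqrt_pos.mpr hp1
  have hs2 : s ^ 2 = p := Real.sq_sqrt hp.le
  have ht2 : t ^ 2 = 1 - p := Real.sq_sqrt hp1.le
  have hst : Real.sqrt (p * (1 - p)) = s * t := by
    rw [hs, ht, Real.sqrt_mul hp.le]
  set q := 2 * (s * t) with hq
  have hq0 : 0 < q := by positivity
  have hq1 : 0 < 1 + q := by linarith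
  have hsum : s + t > 0 := by linarith
  have hsum2 : (s + t) ^ 2 = 1 + q := by
    rw [hq]; nlinarith [hs2, ht2]
  have hδ : δ₁ = q / (1 + q) := by
    rw [hδ₁, hρ]
    have h1 : 1 - s / (s + t) = t / (s + t) := by field_simp; ring
    rw [h1, ← hsum2]
    field_simp
    ring
  have h1δ : 1 - δ₁ = 1 / (1 + q) := by
    rw [hδ]; field_simp; ring
  rw [hst, ← hq]
  rw [H, hδ, show (1:ℝ) - q/(1+q) = 1/(1+q) from by field_simp; ring]
  rw [Real.logb_div hq0.ne' hq1.ne', Real.logb_div one_ne_zero hq1.ne',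
    Real.logb_one]
  field_simp
  ring
end

section
/- Let 0 < p < 1/2, u = 2√(p(1−p)), and let τ ∈ (0,1/2) satisfy 1 − 2τ ≤ 2√u/(1+u). Set ω* = (√u/(1+√u))·(1 − 2τ/(1−√u)). Then 1 − 2τ − 2√u(1−ω*) = −√((1−2τ)² − 4ω*(1−ω*)); in particular (1−2τ)² − 4ω*(1−ω*) ≥ 0, so ω* is the root of the stationary-point equation for the function ω ↦ −μ(R,1/2,ω) − A(ω). -/
open Real

/-- Let `0 < p < 1/2`, `u = 2√(p(1−p))`, and let `τ ∈ (0,1/2)` satisfy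
`1 − 2τ ≤ 2√u/(1+u)`. Set `ω* = (√u/(1+√u))·(1 − 2τ/(1−√u))`. Then
`1 − 2τ − 2√u(1−ω*) = −√((1−2τ)² − 4ω*(1−ω*))`; in particular
`(1−2τ)² − 4ω*(1−ω*) ≥ 0`, so `ω*` is the root of the stationary-point equation for
`ω ↦ −μ(R,1/2,ω) − A(ω)`. -/
theorem stationary_point_equation (p u τ ωs : ℝ) (hp : 0 < p) (hp' : p < 1/2)
    (hu : u = 2 * Real.sqrt (p * (1 - p)))
    (hτ0 : 0 < τ) (hτ2 : τ < 1/2)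
    (hτ : 1 - 2 * τ ≤ 2 * Real.sqrt u / (1 + u))
    (hωs : ωs = (Real.sqrt u / (1 + Real.sqrt u)) * (1 - 2 * τ / (1 - Real.sqrt u))) :
    1 - 2 * τ - 2 * Real.sqrt u * (1 - ωs)
        = -Real.sqrt ((1 - 2 * τ)^2 - 4 * ωs * (1 - ωs)) ∧
      0 ≤ (1 - 2 * τ)^2 - 4 * ωs * (1 - ωs) := by
  set s := Real.sqrt u with hsdef
  have hpp : 0 < p * (1 - p) := by nlinarith
  have hu0 : 0 < u := by
    rw [hu]; positivity
  have hu1 : u < 1 := by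
    have h14 : p * (1 - p) < (1/2 : ℝ)^2 := by nlinarith
    have := (Real.sqrt_lt' (by norm_num : (0:ℝ) < 1/2)).2 h14
    rw [hu]; linarith
  have hs0 : 0 < s := Real.sqrt_pos.2 hu0
  have hs1 : s < 1 := by
    have := (Real.sqrt_lt' (by norm_num : (0:ℝ) < 1)).2 (by linarith : u < 1^2)
    simpa using this
  have hs2 : s ^ 2 = u := Real.sq_sqrt hu0.le
  have h1s : (1 : ℝ) - s ≠ 0 := by linarith
  have h1s' : (1 : ℝ) + s ≠ 0 := by linarith
  have hD : (0:ℝ) < 1 - s^2 := by nlinarith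
  set t := 1 - 2 * τ with htdef
  -- from hτ : t ≤ 2s/(1+s²)
  have h1u : (0:ℝ) < 1 + u := by linarith
  have hkey : t * (1 + s^2) ≤ 2 * s := by
    rw [hs2]
    have h := hτ
    rw [le_div_iff₀ h1u] at h
    linarith
  have hinner : (1 - 2 * τ)^2 - 4 * ωs * (1 - ωs)
      = ((2 * s - t * (1 + s^2)) / (1 - s^2))^2 := by
    subst hωs
    field_simp
    ring
  have hnum : 0 ≤ 2 * s - t * (1 + s^2) := by linarith
  have hsqrt : Real.sqrt ((1 - 2 * τ)^2 - 4 * ωs * (1 - ωs))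
      = (2 * s - t * (1 + s^2)) / (1 - s^2) := by
    rw [hinner, Real.sqrt_sq (by positivity)]
  constructor
  · rw [hsqrt, hωs]
    field_simp
    ring
  · rw [hinner]; positivity
end

section
/- Let p ∈ (0,1/2), and let n, w, l be such that w and l are even, l ≤ 2w, and p(n−w) is an integer. Let x_i, x_j, x_k ∈ 𝔽₂ⁿ satisfy d(x_i,x_j) = d(x_i,x_k) = w and d(x_j,x_k) = l. Then P_{x_i}(X_ik ∩ X_ij) = Σ_{m=0}^{min(l/2, p(n−w))} C(l/2, m)² · C(w − l/2, w/2 − m) · C(n − w − l/2, p(n−w) − m) · p^{w/2 + p(n−w)} · (1−p)^{n − w/2 − p(n−w)}, where C(a,b) denotes the binomial coefficient (equal to 0 when b < 0 or b > a). -/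
open Real

/-- BSC output distribution: `P_x(Y) = Σ_{y∈Y} p^{d(x,y)}(1−p)^{n−d(x,y)}`. -/
noncomputable def Px {n : ℕ} (p : ℝ) (x : Fin n → ZMod 2) (Y : Finset (Fin n → ZMod 2)) : ℝ :=
  ∑ y ∈ Y, p ^ hammingDist x y * (1 - p) ^ (n - hammingDist x y)

/-- `X_{xx'} = {u : d(x,u) = d(x',u) = t}`. -/
def Xset {n : ℕ} (x x' : Fin n → ZMod 2) (t : ℕ) : Finset (Fin n → ZMod 2) :=
  Finset.univ.filter fun u => hammingDist x u = t ∧ hammingDist x' u = t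

/-- Binomial coefficient `C(a,b)` for integer arguments, equal to `0` when `b < 0` or
`b > a`. -/
def ichoose (a b : ℤ) : ℕ := if 0 ≤ b ∧ b ≤ a then a.toNat.choose b.toNat else 0

lemma ichoose_eq_choose {a b : ℤ} (ha : 0 ≤ a) (hb : 0 ≤ b) :
    ichoose a b = a.toNat.choose b.toNat := by
  unfold ichoose
  by_cases h : b ≤ a
  · rw [if_pos ⟨hb, h⟩]
  · rw [if_neg (by tauto)]
    exact (Nat.choose_eq_zero_of_lt (by omega)).symm

lemma ichoose_of_neg {a b : ℤ} (hb : b < 0) : ichoose a b = 0 := by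
  unfold ichoose
  rw [if_neg (by omega)]

open Finset

lemma card_symmDiff'' {ι : Type*} [DecidableEq ι] (s t : Finset ι) :
    (symmDiff s t).card + 2 * (s ∩ t).card = s.card + t.card := by
  rw [symmDiff_eq_sup_sdiff_inf]
  have h1 : (s ⊓ t) ⊆ (s ⊔ t) := inter_subset_left.trans subset_union_left
  have h2 := Finset.card_sdiff_of_subset h1
  have h3 := Finset.card_union_add_card_inter s t
  have h4 : (s ⊓ t).card ≤ (s ⊔ t).card := card_le_card h1
  have hsup : (s ⊔ t) = s ∪ t := rfl
  have hinf : (s ⊓ t) = s ∩ t := rfl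
  rw [hsup, hinf] at h2 h4 ⊢
  omega

set_option maxHeartbeats 1000000 in
/-- Counting subsets with prescribed intersection sizes with a partition into four blocks. -/
lemma card_four {ι : Type*} [DecidableEq ι] [Fintype ι]
    (A B C D : Finset ι)
    (hAB : Disjoint A B) (hAC : Disjoint A C) (hAD : Disjoint A D)
    (hBC : Disjoint B C) (hBD : Disjoint B D) (hCD : Disjoint C D)
    (huniv : A ∪ B ∪ C ∪ D = univ) (a b c d : ℕ) :
    ((univ : Finset (Finset ι)).filter fun S =>
        (S ∩ A).card = a ∧ (S ∩ B).card = b ∧ (S ∩ C).card = c ∧ (S ∩ D).card = d).card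
      = A.card.choose a * B.card.choose b * C.card.choose c * D.card.choose d := by
  have aux : ∀ P Q R T : Finset ι, P ⊆ A → Q ⊆ B → R ⊆ C → T ⊆ D →
      (P ∪ Q ∪ R ∪ T) ∩ A = P ∧ (P ∪ Q ∪ R ∪ T) ∩ B = Q ∧
      (P ∪ Q ∪ R ∪ T) ∩ C = R ∧ (P ∪ Q ∪ R ∪ T) ∩ D = T := by
    intro P Q R T hP hQ hR hT
    refine ⟨?_, ?_, ?_, ?_⟩
    · rw [union_inter_distrib_right, union_inter_distrib_right, union_inter_distrib_right,
        inter_eq_left.mpr hP,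
        Finset.disjoint_iff_inter_eq_empty.mp (hAB.symm.mono_left hQ),
        Finset.disjoint_iff_inter_eq_empty.mp (hAC.symm.mono_left hR),
        Finset.disjoint_iff_inter_eq_empty.mp (hAD.symm.mono_left hT),
        union_empty, union_empty, union_empty]
    · rw [union_inter_distrib_right, union_inter_distrib_right, union_inter_distrib_right,
        inter_eq_left.mpr hQ,
        Finset.disjoint_iff_inter_eq_empty.mp (hAB.mono_left hP),
        Finset.disjoint_iff_inter_eq_empty.mp (hBC.symm.mono_left hR),
        Finset.disjoint_iff_inter_eq_empty.mp (hBD.symm.mono_left hT),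
        empty_union, union_empty, union_empty]
    · rw [union_inter_distrib_right, union_inter_distrib_right, union_inter_distrib_right,
        inter_eq_left.mpr hR,
        Finset.disjoint_iff_inter_eq_empty.mp (hAC.mono_left hP),
        Finset.disjoint_iff_inter_eq_empty.mp (hBC.mono_left hQ),
        Finset.disjoint_iff_inter_eq_empty.mp (hCD.symm.mono_left hT),
        empty_union, empty_union, union_empty]
    · rw [union_inter_distrib_right, union_inter_distrib_right, union_inter_distrib_right,
        inter_eq_left.mpr hT,
        Finset.disjoint_iff_inter_eq_empty.mp (hAD.mono_left hP),
        Finset.disjoint_iff_inter_eq_empty.mp (hBD.mono_left hQ),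
        Finset.disjoint_iff_inter_eq_empty.mp (hCD.mono_left hR),
        empty_union, empty_union, empty_union]
  have key : ((univ : Finset (Finset ι)).filter fun S =>
        (S ∩ A).card = a ∧ (S ∩ B).card = b ∧ (S ∩ C).card = c ∧ (S ∩ D).card = d).card
      = ((powersetCard a A ×ˢ powersetCard b B) ×ˢ (powersetCard c C ×ˢ powersetCard d D)).card := by
    apply Finset.card_nbij' (i := fun S => ((S ∩ A, S ∩ B), (S ∩ C, S ∩ D)))
      (j := fun q => q.1.1 ∪ q.1.2 ∪ q.2.1 ∪ q.2.2)
    · intro S hS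
      simp only [mem_coe, mem_filter, mem_univ, true_and] at hS
      simp only [mem_coe, mem_product, mem_powersetCard]
      exact ⟨⟨⟨inter_subset_right, hS.1⟩, ⟨inter_subset_right, hS.2.1⟩⟩,
        ⟨⟨inter_subset_right, hS.2.2.1⟩, ⟨inter_subset_right, hS.2.2.2⟩⟩⟩
    · intro q hq
      simp only [mem_coe, mem_product, mem_powersetCard] at hq
      obtain ⟨⟨⟨hP, hPa⟩, ⟨hQ, hQb⟩⟩, ⟨⟨hR, hRc⟩, ⟨hT, hTd⟩⟩⟩ := hq
      obtain ⟨e1, e2, e3, e4⟩ := aux _ _ _ _ hP hQ hR hT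
      simp only [mem_coe, mem_filter, mem_univ, true_and]
      rw [e1, e2, e3, e4]
      exact ⟨hPa, hQb, hRc, hTd⟩
    · intro S hS
      have hdis : (S ∩ A) ∪ (S ∩ B) ∪ (S ∩ C) ∪ (S ∩ D) = S ∩ (A ∪ B ∪ C ∪ D) := by
        rw [inter_union_distrib_left, inter_union_distrib_left, inter_union_distrib_left]
      simp only [hdis, huniv, inter_univ]
    · intro q hq
      simp only [mem_coe, mem_product, mem_powersetCard] at hq
      obtain ⟨⟨⟨hP, _⟩, ⟨hQ, _⟩⟩, ⟨⟨hR, _⟩, ⟨hT, _⟩⟩⟩ := hq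
      obtain ⟨e1, e2, e3, e4⟩ := aux _ _ _ _ hP hQ hR hT
      simp only [e1, e2, e3, e4]
  rw [key]
  simp only [card_product, card_powersetCard]
  ring

set_option maxHeartbeats 1000000 in
/-- The central counting lemma. -/
lemma count_main {ι : Type*} [DecidableEq ι] [Fintype ι]
    (J K : Finset ι) (w l e : ℕ) (hw : Even w) (hl : Even l) (hlw : l ≤ 2 * w)
    (hJ : J.card = w) (hK : K.card = w) (hJK : (symmDiff J K).card = l) :
    ((univ : Finset (Finset ι)).filter fun S =>
        S.card = w / 2 + e ∧ (S ∩ J).card = w / 2 ∧ (S ∩ K).card = w / 2).card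
      = ∑ m ∈ Finset.range (l / 2 + 1),
          ichoose ((l / 2 : ℕ) : ℤ) (m : ℤ) * ichoose ((l / 2 : ℕ) : ℤ) (m : ℤ) *
          ichoose ((w : ℤ) - ((l / 2 : ℕ) : ℤ)) (((w / 2 : ℕ) : ℤ) - (m : ℤ)) *
          ichoose ((Fintype.card ι : ℤ) - (w : ℤ) - ((l / 2 : ℕ) : ℤ)) ((e : ℤ) - (m : ℤ)) := by
  obtain ⟨w2, hw2⟩ := hw
  obtain ⟨l2, hl2⟩ := hl
  set A : Finset ι := J ∩ K with hA
  set B : Finset ι := J \ K with hB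
  set C : Finset ι := K \ J with hC
  set D : Finset ι := (J ∪ K)ᶜ with hD
  -- disjointness
  have hAB : Disjoint A B := by
    rw [Finset.disjoint_left]; intro x hx hx'
    simp only [hA, hB, mem_inter, mem_sdiff] at hx hx'; tauto
  have hAC : Disjoint A C := by
    rw [Finset.disjoint_left]; intro x hx hx'
    simp only [hA, hC, mem_inter, mem_sdiff] at hx hx'; tauto
  have hAD : Disjoint A D := by
    rw [Finset.disjoint_left]; intro x hx hx'
    simp only [hA, hD, mem_inter, mem_compl, mem_union] at hx hx'; tauto
  have hBC : Disjoint B C := by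
    rw [Finset.disjoint_left]; intro x hx hx'
    simp only [hB, hC, mem_sdiff] at hx hx'; tauto
  have hBD : Disjoint B D := by
    rw [Finset.disjoint_left]; intro x hx hx'
    simp only [hB, hD, mem_sdiff, mem_compl, mem_union] at hx hx'; tauto
  have hCD : Disjoint C D := by
    rw [Finset.disjoint_left]; intro x hx hx'
    simp only [hC, hD, mem_sdiff, mem_compl, mem_union] at hx hx'; tauto
  have huniv : A ∪ B ∪ C ∪ D = univ := by
    ext x
    simp only [hA, hB, hC, hD, mem_union, mem_inter, mem_sdiff, mem_compl, mem_univ, iff_true]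
    tauto
  have hJeq : A ∪ B = J := by
    ext x
    simp only [hA, hB, mem_union, mem_inter, mem_sdiff]
    tauto
  have hKeq : A ∪ C = K := by
    ext x
    simp only [hA, hC, mem_union, mem_inter, mem_sdiff]
    tauto
  -- cardinalities of the blocks
  have hsd : (symmDiff J K).card + 2 * A.card = J.card + K.card := card_symmDiff'' J K
  have hsdiffBC : symmDiff J K = B ∪ C := rfl
  have hBCdisj : (B ∪ C).card = B.card + C.card := card_union_of_disjoint hBC
  have hBA : B.card + A.card = J.card := Finset.card_sdiff_add_card_inter J K
  have hCA : C.card + A.card = K.card := by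
    rw [hC, hA, inter_comm J K]
    exact Finset.card_sdiff_add_card_inter K J
  rw [hsdiffBC, hBCdisj] at hJK
  rw [hsdiffBC, hBCdisj] at hsd
  have hcardA : A.card = w - l / 2 := by omega
  have hcardB : B.card = l / 2 := by omega
  have hcardC : C.card = l / 2 := by omega
  have hunion : (J ∪ K).card + A.card = J.card + K.card :=
    Finset.card_union_add_card_inter J K
  have hle : (J ∪ K).card ≤ Fintype.card ι :=
    (card_le_card (subset_univ _)).trans_eq card_univ
  have hcardD : D.card = Fintype.card ι - w - l / 2 := by
    have h1 : D.card = Fintype.card ι - (J ∪ K).card := card_compl _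
    omega
  have hn : w + l / 2 ≤ Fintype.card ι := by omega
  -- decomposition identities for arbitrary S
  have hSJ : ∀ S : Finset ι, (S ∩ J).card = (S ∩ A).card + (S ∩ B).card := by
    intro S
    have h : S ∩ J = (S ∩ A) ∪ (S ∩ B) := by
      rw [← inter_union_distrib_left, hJeq]
    rw [h, card_union_of_disjoint (hAB.mono inter_subset_right inter_subset_right)]
  have hSK : ∀ S : Finset ι, (S ∩ K).card = (S ∩ A).card + (S ∩ C).card := by
    intro S
    have h : S ∩ K = (S ∩ A) ∪ (S ∩ C) := by
      rw [← inter_union_distrib_left, hKeq]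
    rw [h, card_union_of_disjoint (hAC.mono inter_subset_right inter_subset_right)]
  have hScard : ∀ S : Finset ι,
      S.card = (S ∩ A).card + (S ∩ B).card + (S ∩ C).card + (S ∩ D).card := by
    intro S
    have h : S = ((S ∩ A) ∪ (S ∩ B) ∪ (S ∩ C)) ∪ (S ∩ D) := by
      rw [← inter_union_distrib_left, ← inter_union_distrib_left, ← inter_union_distrib_left,
        huniv, inter_univ]
    have dABC_D : Disjoint ((S ∩ A) ∪ (S ∩ B) ∪ (S ∩ C)) (S ∩ D) := by
      rw [Finset.disjoint_union_left, Finset.disjoint_union_left]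
      exact ⟨⟨hAD.mono inter_subset_right inter_subset_right,
        hBD.mono inter_subset_right inter_subset_right⟩,
        hCD.mono inter_subset_right inter_subset_right⟩
    have dAB_C : Disjoint ((S ∩ A) ∪ (S ∩ B)) (S ∩ C) := by
      rw [Finset.disjoint_union_left]
      exact ⟨hAC.mono inter_subset_right inter_subset_right,
        hBC.mono inter_subset_right inter_subset_right⟩
    conv_lhs => rw [h]
    rw [card_union_of_disjoint dABC_D, card_union_of_disjoint dAB_C,
      card_union_of_disjoint (hAB.mono inter_subset_right inter_subset_right)]
  -- split the count fiberwise by (S ∩ B).card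
  rw [Finset.card_eq_sum_card_fiberwise (f := fun S => (S ∩ B).card)
    (t := Finset.range (l / 2 + 1)) (fun S _ => by
      rw [mem_coe, mem_range, Nat.lt_succ_iff, ← hcardB]
      exact card_le_card inter_subset_right)]
  refine Finset.sum_congr rfl ?_
  intro m hm
  rw [mem_range, Nat.lt_succ_iff] at hm
  rw [Finset.filter_filter]
  by_cases hcase : m ≤ w / 2 ∧ m ≤ e
  · -- good case
    obtain ⟨hmw, hme⟩ := hcase
    have hset : ((univ : Finset (Finset ι)).filter fun S =>
          (S.card = w / 2 + e ∧ (S ∩ J).card = w / 2 ∧ (S ∩ K).card = w / 2) ∧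
            (S ∩ B).card = m)
        = ((univ : Finset (Finset ι)).filter fun S =>
          (S ∩ A).card = w / 2 - m ∧ (S ∩ B).card = m ∧ (S ∩ C).card = m ∧
            (S ∩ D).card = e - m) := by
      ext S
      simp only [mem_filter, mem_univ, true_and]
      have e1 := hSJ S
      have e2 := hSK S
      have e3 := hScard S
      omega
    rw [hset, card_four A B C D hAB hAC hAD hBC hBD hCD huniv,
      hcardA, hcardB, hcardC, hcardD]
    have f1 : ichoose ((l / 2 : ℕ) : ℤ) (m : ℤ) = (l / 2).choose m := by
      rw [ichoose_eq_choose (by omega) (by omega)]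
      congr 1 <;> omega
    have f2 : ichoose ((w : ℤ) - ((l / 2 : ℕ) : ℤ)) (((w / 2 : ℕ) : ℤ) - (m : ℤ))
        = (w - l / 2).choose (w / 2 - m) := by
      rw [ichoose_eq_choose (by omega) (by omega)]
      congr 1 <;> omega
    have f3 : ichoose ((Fintype.card ι : ℤ) - (w : ℤ) - ((l / 2 : ℕ) : ℤ)) ((e : ℤ) - (m : ℤ))
        = (Fintype.card ι - w - l / 2).choose (e - m) := by
      rw [ichoose_eq_choose (by omega) (by omega)]
      congr 1 <;> omega
    rw [f1, f2, f3]
    ring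
  · -- degenerate case: the fiber is empty and the corresponding term is zero
    have hempty : ((univ : Finset (Finset ι)).filter fun S =>
          (S.card = w / 2 + e ∧ (S ∩ J).card = w / 2 ∧ (S ∩ K).card = w / 2) ∧
            (S ∩ B).card = m) = ∅ := by
      rw [Finset.filter_eq_empty_iff]
      intro S _
      have e1 := hSJ S
      have e2 := hSK S
      have e3 := hScard S
      omega
    rw [hempty, card_empty]
    rcases not_and_or.mp hcase with h | h
    · rw [ichoose_of_neg (a := (w : ℤ) - ((l / 2 : ℕ) : ℤ)) (by omega)]
      ring
    · rw [ichoose_of_neg (a := (Fintype.card ι : ℤ) - (w : ℤ) - ((l / 2 : ℕ) : ℤ)) (by omega)]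
      ring

lemma zmod_ne_aux : ∀ a b c : ZMod 2,
    (b ≠ c) ↔ ((a ≠ b ∧ ¬a ≠ c) ∨ (a ≠ c ∧ ¬a ≠ b)) := by decide

lemma zmod_add_one : ∀ a b : ZMod 2, a ≠ b → a + 1 = b := by decide

lemma zmod_ne_add_one : ∀ a : ZMod 2, a ≠ a + 1 := by decide

set_option maxHeartbeats 1000000 in
/-- Transfer from codewords to subsets. -/
lemma card_Xset_eq {n : ℕ} (xi xj xk : Fin n → ZMod 2) (t w : ℕ) (hw : Even w)
    (hij : hammingDist xi xj = w) (hik : hammingDist xi xk = w)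
    (J : Finset (Fin n)) (hJdef : J = univ.filter fun i => xi i ≠ xj i)
    (K : Finset (Fin n)) (hKdef : K = univ.filter fun i => xi i ≠ xk i) :
    (Xset xi xk t ∩ Xset xi xj t).card
      = ((univ : Finset (Finset (Fin n))).filter fun S =>
          S.card = t ∧ (S ∩ J).card = w / 2 ∧ (S ∩ K).card = w / 2).card := by
  obtain ⟨w2, hw2⟩ := hw
  have hJcard : J.card = w := by rw [hJdef]; exact hij
  have hKcard : K.card = w := by rw [hKdef]; exact hik
  -- the symmetric-difference identity for filters
  have hfilt : ∀ (y u : Fin n → ZMod 2),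
      (univ.filter fun i => y i ≠ u i)
        = symmDiff (univ.filter fun i => xi i ≠ u i) (univ.filter fun i => xi i ≠ y i) := by
    intro y u
    ext i
    simp only [Finset.mem_symmDiff, mem_filter, mem_univ, true_and]
    exact (zmod_ne_aux (xi i) (y i) (u i)).trans or_comm
  have hright : ∀ S : Finset (Fin n),
      (univ.filter fun i => xi i ≠ (fun idx => xi idx + (if idx ∈ S then 1 else 0)) i) = S := by
    intro S
    ext i
    simp only [mem_filter, mem_univ, true_and]
    by_cases h : i ∈ S
    · rw [if_pos h]
      simp only [h, iff_true]
      exact zmod_ne_add_one (xi i)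
    · rw [if_neg h, add_zero]
      simp [h]
  apply Finset.card_nbij' (i := fun u => univ.filter fun i => xi i ≠ u i)
    (j := fun S => fun idx => xi idx + (if idx ∈ S then 1 else 0))
  · -- forward membership
    intro u hu
    rw [mem_coe, mem_inter] at hu
    obtain ⟨hu1, hu2⟩ := hu
    simp only [Xset, mem_filter, mem_univ, true_and] at hu1 hu2
    obtain ⟨hdik, hdkk⟩ := hu1
    obtain ⟨hdij2, hdjj⟩ := hu2
    have hScard : (univ.filter fun i => xi i ≠ u i).card = t := hdik
    have hdj : hammingDist xj u
        = (symmDiff (univ.filter fun i => xi i ≠ u i) J).card := by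
      rw [hJdef, ← hfilt xj u]; rfl
    have hdk : hammingDist xk u
        = (symmDiff (univ.filter fun i => xi i ≠ u i) K).card := by
      rw [hKdef, ← hfilt xk u]; rfl
    have hsd1 := card_symmDiff'' (univ.filter fun i => xi i ≠ u i) J
    have hsd2 := card_symmDiff'' (univ.filter fun i => xi i ≠ u i) K
    rw [← hdj, hdjj] at hsd1
    rw [← hdk, hdkk] at hsd2
    simp only [mem_coe, mem_filter, mem_univ, true_and]
    refine ⟨hScard, ?_, ?_⟩ <;> omega
  · -- backward membership
    intro S hS
    simp only [mem_coe, mem_filter, mem_univ, true_and] at hS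
    obtain ⟨hScard, hSJ, hSK⟩ := hS
    set u : Fin n → ZMod 2 := fun idx => xi idx + (if idx ∈ S then 1 else 0) with hu
    have h1 : hammingDist xi u = t := by
      show (univ.filter fun i => xi i ≠ u i).card = t
      rw [hu, hright S]; exact hScard
    have hdj : hammingDist xj u = (symmDiff S J).card := by
      have hq := hfilt xj u
      rw [hu, hright S] at hq
      rw [hJdef, ← hq]; rfl
    have hdk : hammingDist xk u = (symmDiff S K).card := by
      have hq := hfilt xk u
      rw [hu, hright S] at hq
      rw [hKdef, ← hq]; rfl
    have hsd1 := card_symmDiff'' S J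
    have hsd2 := card_symmDiff'' S K
    rw [mem_coe, mem_inter]
    simp only [Xset, mem_filter, mem_univ, true_and]
    refine ⟨⟨h1, by rw [hdk]; omega⟩, h1, by rw [hdj]; omega⟩
  · -- left inverse
    intro u _
    funext idx
    dsimp only
    by_cases h : xi idx ≠ u idx
    · rw [if_pos (by simp only [mem_filter, mem_univ, true_and]; exact h)]
      exact zmod_add_one _ _ h
    · rw [if_neg (by simp only [mem_filter, mem_univ, true_and]; exact h)]
      push_neg at h
      rw [add_zero, h]
  · -- right inverse
    intro S _
    exact hright S

set_option maxHeartbeats 1000000 in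
/-- Let `p ∈ (0,1/2)`, and let `n, w, l` be such that `w` and `l` are even, `l ≤ 2w`, and
`p(n−w)` is an integer `e`. Let `x_i, x_j, x_k ∈ 𝔽₂ⁿ` satisfy `d(x_i,x_j) = d(x_i,x_k) = w`
and `d(x_j,x_k) = l`. Then, with `t = w/2 + e`,
`P_{x_i}(X_ik ∩ X_ij) = Σ_{m=0}^{min(l/2,e)} C(l/2,m)²·C(w−l/2, w/2−m)·C(n−w−l/2, e−m)
·p^{w/2+e}·(1−p)^{n−w/2−e}`. -/
theorem intersection_probability_formula {n : ℕ} (p : ℝ) (hp : 0 < p) (hp' : p < 1/2)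
    (w l e : ℕ) (hw : Even w) (hl : Even l) (hlw : l ≤ 2 * w)
    (he : (e : ℝ) = p * ((n : ℝ) - (w : ℝ)))
    (xi xj xk : Fin n → ZMod 2)
    (hij : hammingDist xi xj = w) (hik : hammingDist xi xk = w)
    (hjk : hammingDist xj xk = l) :
    Px p xi (Xset xi xk (w / 2 + e) ∩ Xset xi xj (w / 2 + e))
      = ∑ m ∈ Finset.range (min (l / 2) e + 1),
          ((ichoose (l / 2 : ℕ) m : ℝ))^2 *
            (ichoose ((w : ℤ) - (l / 2 : ℕ)) ((w / 2 : ℕ) - (m : ℤ)) : ℝ) *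
            (ichoose ((n : ℤ) - w - (l / 2 : ℕ)) ((e : ℤ) - (m : ℤ)) : ℝ) *
            p ^ (w / 2 + e) * (1 - p) ^ (n - w / 2 - e) := by
  set t : ℕ := w / 2 + e with hT
  set J : Finset (Fin n) := univ.filter fun i => xi i ≠ xj i with hJdef
  set K : Finset (Fin n) := univ.filter fun i => xi i ≠ xk i with hKdef
  have hJcard : J.card = w := hij
  have hKcard : K.card = w := hik
  have hJK : (symmDiff J K).card = l := by
    have h1 : (univ.filter fun i => xj i ≠ xk i) = symmDiff J K := by
      rw [hJdef, hKdef]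
      ext i
      simp only [Finset.mem_symmDiff, mem_filter, mem_univ, true_and]
      exact zmod_ne_aux (xi i) (xj i) (xk i)
    rw [← h1]
    exact hjk
  -- the count
  have hcount := count_main J K w l e hw hl hlw hJcard hKcard hJK
  rw [Fintype.card_fin] at hcount
  have hcard : (Xset xi xk t ∩ Xset xi xj t).card
      = ∑ m ∈ Finset.range (l / 2 + 1),
          ichoose ((l / 2 : ℕ) : ℤ) (m : ℤ) * ichoose ((l / 2 : ℕ) : ℤ) (m : ℤ) *
          ichoose ((w : ℤ) - ((l / 2 : ℕ) : ℤ)) (((w / 2 : ℕ) : ℤ) - (m : ℤ)) *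
          ichoose ((n : ℤ) - (w : ℤ) - ((l / 2 : ℕ) : ℤ)) ((e : ℤ) - (m : ℤ)) := by
    rw [card_Xset_eq xi xj xk t w hw hij hik J hJdef K hKdef]
    exact hcount
  -- evaluate Px
  have hPx : Px p xi (Xset xi xk t ∩ Xset xi xj t)
      = ((Xset xi xk t ∩ Xset xi xj t).card : ℝ) * (p ^ t * (1 - p) ^ (n - t)) := by
    have hconst : ∀ y ∈ Xset xi xk t ∩ Xset xi xj t,
        p ^ hammingDist xi y * (1 - p) ^ (n - hammingDist xi y)
          = p ^ t * (1 - p) ^ (n - t) := by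
      intro y hy
      rw [mem_inter] at hy
      have hy1 := hy.1
      simp only [Xset, mem_filter, mem_univ, true_and] at hy1
      rw [hy1.1]
    calc Px p xi (Xset xi xk t ∩ Xset xi xj t)
        = ∑ _y ∈ Xset xi xk t ∩ Xset xi xj t, p ^ t * (1 - p) ^ (n - t) :=
          Finset.sum_congr rfl hconst
      _ = ((Xset xi xk t ∩ Xset xi xj t).card : ℝ) * (p ^ t * (1 - p) ^ (n - t)) := by
          rw [Finset.sum_const, nsmul_eq_mul]
  rw [hPx, hcard]
  have hexp : n - w / 2 - e = n - t := by omega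
  rw [hexp]
  have hext : (∑ m ∈ Finset.range (min (l / 2) e + 1),
        ((ichoose (l / 2 : ℕ) m : ℝ))^2 *
          (ichoose ((w : ℤ) - (l / 2 : ℕ)) ((w / 2 : ℕ) - (m : ℤ)) : ℝ) *
          (ichoose ((n : ℤ) - w - (l / 2 : ℕ)) ((e : ℤ) - (m : ℤ)) : ℝ) *
          p ^ t * (1 - p) ^ (n - t))
      = ∑ m ∈ Finset.range (l / 2 + 1),
        ((ichoose (l / 2 : ℕ) m : ℝ))^2 *
          (ichoose ((w : ℤ) - (l / 2 : ℕ)) ((w / 2 : ℕ) - (m : ℤ)) : ℝ) *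
          (ichoose ((n : ℤ) - w - (l / 2 : ℕ)) ((e : ℤ) - (m : ℤ)) : ℝ) *
          p ^ t * (1 - p) ^ (n - t) := by
    refine Finset.sum_subset (Finset.range_subset_range.mpr (by omega)) ?_
    intro m hm hm'
    rw [Finset.mem_range, Nat.lt_succ_iff] at hm
    rw [Finset.mem_range, Nat.lt_succ_iff, not_le] at hm'
    have hneg : (e : ℤ) - (m : ℤ) < 0 := by omega
    rw [ichoose_of_neg hneg]
    push_cast
    ring
  rw [hext, Nat.cast_sum, Finset.sum_mul]
  exact Finset.sum_congr rfl fun m hm => by push_cast; ring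
end

section
/- In the random-pruning setup, let x_j be a w-neighbor of x_i. Then, with respect to the uniformly random labelling of the w-neighbors of x_i, ℙ( K_ij ≤ 1/2 ) ≥ min{ 1, (1/4)·min_{l∈Λ} N_{w,l}/min(B_w^{x_i}, B_l^{x_j}) }, where the minimum over the empty set Λ = ∅ is interpreted so that the right-hand side equals 1. -/
open Real

/-- `P_{x_i}(X_{ik} | X_{ij}) = P_{x_i}(X_{ik} ∩ X_{ij}) / P_{x_i}(X_{ij})`. -/
noncomputable def condP {n : ℕ} (p : ℝ) (xi xj xk : Fin n → ZMod 2) (t : ℕ) : ℝ :=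
  Px p xi (Xset xi xk t ∩ Xset xi xj t) / Px p xi (Xset xi xj t)

/-- The `w`-neighborhood of `x` in the code `C`. -/
def nbrs {n : ℕ} (C : Finset (Fin n → ZMod 2)) (x : Fin n → ZMod 2) (w : ℕ) :
    Finset (Fin n → ZMod 2) :=
  C.filter fun c => hammingDist x c = w

/-- `K_ij = Σ_{x_k : s_{ik} < s_{ij}} P_{x_i}(X_{ik} | X_{ij})`, for a labelling `s` of
the `w`-neighbors of `x_i`. -/
noncomputable def Kij {n : ℕ} (p : ℝ) (C : Finset (Fin n → ZMod 2))
    (xi xj : Fin n → ZMod 2) (w t : ℕ) (hj : xj ∈ nbrs C xi w)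
    (s : {c // c ∈ nbrs C xi w} ≃ Fin (nbrs C xi w).card) : ℝ :=
  ∑ k ∈ (nbrs C xi w).attach, if s k < s ⟨xj, hj⟩ then condP p xi xj k.1 t else 0


section CountingInfra
open Finset

section Counting

variable {α : Type} [Fintype α] [DecidableEq α] {B : ℕ}

/-- Post-composition with a permutation, as an equiv on labellings. -/
def transEquiv (pb : Equiv.Perm (Fin B)) : (α ≃ Fin B) ≃ (α ≃ Fin B) where
  toFun s := s.trans pb
  invFun s := s.trans pb.symm
  left_inv s := by ext x; simp
  right_inv s := by ext x; simp

lemma count_trans (pb : Equiv.Perm (Fin B)) (Q Q' : (α ≃ Fin B) → Prop)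
    [DecidablePred Q] [DecidablePred Q']
    (h : ∀ s : α ≃ Fin B, Q s ↔ Q' (s.trans pb)) :
    (univ.filter Q).card = (univ.filter Q').card := by
  refine Finset.card_equiv (transEquiv pb) fun s => ?_
  simp only [mem_filter, mem_univ, true_and, transEquiv, Equiv.coe_fn_mk]
  exact h s

lemma exists_perm_pair {a b a' b' : Fin B} (hab : a ≠ b) (hab' : a' ≠ b') :
    ∃ pb : Equiv.Perm (Fin B), pb a = a' ∧ pb b = b' := by
  refine ⟨(Equiv.swap b b').trans (Equiv.swap (Equiv.swap b b' a) a'), ?_, ?_⟩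
  · simp [Equiv.trans_apply]
  · have h1 : Equiv.swap b b' a ≠ b' := by
      intro h
      apply hab
      have := congrArg (Equiv.swap b b') h
      simpa using this
    rw [Equiv.trans_apply, Equiv.swap_apply_left]
    exact Equiv.swap_apply_of_ne_of_ne (Ne.symm h1) (Ne.symm hab')

lemma perm_apply_iff (pb : Equiv.Perm (Fin B)) {x x' : Fin B} (h : pb x = x') (y : Fin B) :
    y = x ↔ pb y = x' := by
  subst h; exact (pb.injective.eq_iff).symm

lemma cnt1_const (j0 : α) (b b' : Fin B) :
    (univ.filter fun s : α ≃ Fin B => s j0 = b).card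
      = (univ.filter fun s : α ≃ Fin B => s j0 = b').card := by
  refine count_trans (Equiv.swap b b') _ _ fun s => ?_
  rw [Equiv.trans_apply]
  exact perm_apply_iff _ (Equiv.swap_apply_left b b') _

lemma cnt2_const (k j0 : α) {a b a' b' : Fin B} (hab : a ≠ b) (hab' : a' ≠ b') :
    (univ.filter fun s : α ≃ Fin B => s k = a ∧ s j0 = b).card
      = (univ.filter fun s : α ≃ Fin B => s k = a' ∧ s j0 = b').card := by
  obtain ⟨pb, h1, h2⟩ := exists_perm_pair hab hab'
  refine count_trans pb _ _ fun s => ?_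
  rw [Equiv.trans_apply, Equiv.trans_apply]
  exact and_congr (perm_apply_iff pb h1 _) (perm_apply_iff pb h2 _)

end Counting

section Counting2

variable {α : Type} [Fintype α] [DecidableEq α] {B : ℕ}

lemma sum_fin_filter_lt {M : Type} [AddCommMonoid M] (g : ℕ → M) (v : ℕ) (hv : v ≤ B) :
    ∑ b ∈ univ.filter (fun b : Fin B => (b : ℕ) < v), g (b : ℕ) = ∑ i ∈ range v, g i := by
  refine Finset.sum_bij' (fun b _ => (b : ℕ))
    (fun i hi => (⟨i, lt_of_lt_of_le (mem_range.mp hi) hv⟩ : Fin B)) ?_ ?_ ?_ ?_ ?_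
  · intro a ha; simp only [mem_filter, mem_univ, true_and] at ha; exact mem_range.mpr ha
  · intro i hi; simp only [mem_filter, mem_univ, true_and]; exact mem_range.mp hi
  · intro a _; simp
  · intro i _; simp
  · intro a _; rfl

lemma card_fin_filter_lt (v : ℕ) (hv : v ≤ B) :
    (univ.filter (fun b : Fin B => (b : ℕ) < v)).card = v := by
  rw [Finset.card_eq_sum_ones, sum_fin_filter_lt (fun _ => 1) v hv, Finset.sum_const,
    card_range, smul_eq_mul, mul_one]

lemma count_univ (j0 : α) (b₀ : Fin B) :
    (univ : Finset (α ≃ Fin B)).card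
      = B * (univ.filter fun s : α ≃ Fin B => s j0 = b₀).card := by
  rw [Finset.card_eq_sum_card_fiberwise
      (f := fun s : α ≃ Fin B => s j0) (t := univ) (fun x _ => mem_univ _),
    Finset.sum_congr rfl (fun b _ => cnt1_const j0 b b₀), Finset.sum_const,
    card_univ, Fintype.card_fin, smul_eq_mul]

lemma count_prefix (j0 : α) (b₀ : Fin B) (m : ℕ) (hm : m ≤ B) :
    (univ.filter fun s : α ≃ Fin B => (s j0 : ℕ) < m).card
      = m * (univ.filter fun s : α ≃ Fin B => s j0 = b₀).card := by
  rw [Finset.card_eq_sum_card_fiberwise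
      (f := fun s : α ≃ Fin B => s j0) (t := univ.filter (fun b : Fin B => (b : ℕ) < m))
      (fun s hs => by
        simp only [mem_coe, mem_filter, mem_univ, true_and] at hs ⊢; exact hs)]
  have h1 : ∀ b ∈ univ.filter (fun b : Fin B => (b : ℕ) < m),
      ((univ.filter fun s : α ≃ Fin B => (s j0 : ℕ) < m).filter
        (fun s => s j0 = b)).card
      = (univ.filter fun s : α ≃ Fin B => s j0 = b₀).card := by
    intro b hb
    simp only [mem_filter, mem_univ, true_and] at hb
    rw [Finset.filter_filter]
    rw [Finset.filter_congr (q := fun s : α ≃ Fin B => s j0 = b)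
      (fun s _ => ⟨fun h => h.2, fun h => ⟨by rw [h]; exact hb, h⟩⟩)]
    exact cnt1_const j0 b b₀
  rw [Finset.sum_congr rfl h1, Finset.sum_const, card_fin_filter_lt m hm, smul_eq_mul]

lemma count_pair (k j0 : α) (hkj : k ≠ j0) (b : Fin B) :
    (B - 1) * (univ.filter fun s : α ≃ Fin B => s k < s j0 ∧ s j0 = b).card
      = (b : ℕ) * (univ.filter fun s : α ≃ Fin B => s j0 = b).card := by
  -- the fiber over each `a ≠ b` of the map `s ↦ s k` inside `{s j0 = b}`
  have hfib : ∀ a : Fin B, a ≠ b →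
      (univ.filter fun s : α ≃ Fin B => s j0 = b).card
        = (B - 1) * (univ.filter fun s : α ≃ Fin B => s k = a ∧ s j0 = b).card := by
    intro a ha
    rw [Finset.card_eq_sum_card_fiberwise
        (f := fun s : α ≃ Fin B => s k) (t := univ.erase b)
        (fun s hs => by
          simp only [mem_coe, mem_filter, mem_univ, true_and] at hs
          refine mem_erase.mpr ⟨fun h => hkj (s.injective (by simpa [hs] using h)), mem_univ _⟩)]
    have h1 : ∀ a' ∈ univ.erase b,
        ((univ.filter fun s : α ≃ Fin B => s j0 = b).filter (fun s => s k = a')).card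
          = (univ.filter fun s : α ≃ Fin B => s k = a ∧ s j0 = b).card := by
      intro a' ha'
      rw [Finset.filter_filter]
      rw [Finset.filter_congr (q := fun s : α ≃ Fin B => s k = a' ∧ s j0 = b)
        (fun s _ => and_comm)]
      exact cnt2_const k j0 (mem_erase.mp ha').1 ha
    rw [Finset.sum_congr rfl h1, Finset.sum_const, smul_eq_mul,
      Finset.card_erase_of_mem (mem_univ _), card_univ, Fintype.card_fin]
  -- decompose the LHS fiberwise over `a = s k < b`
  rw [Finset.card_eq_sum_card_fiberwise
      (f := fun s : α ≃ Fin B => s k) (t := univ.filter (fun a : Fin B => a < b))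
      (fun s hs => by
        simp only [mem_coe, mem_filter, mem_univ, true_and] at hs ⊢
        rw [← hs.2]; exact hs.1)]
  have h2 : ∀ a ∈ univ.filter (fun a : Fin B => a < b),
      (B - 1) * ((univ.filter fun s : α ≃ Fin B => s k < s j0 ∧ s j0 = b).filter
          (fun s => s k = a)).card
        = (univ.filter fun s : α ≃ Fin B => s j0 = b).card := by
    intro a ha
    simp only [mem_filter, mem_univ, true_and] at ha
    rw [Finset.filter_filter]
    rw [Finset.filter_congr (q := fun s : α ≃ Fin B => s k = a ∧ s j0 = b)
      (fun s _ => ⟨fun h => ⟨h.2, h.1.2⟩,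
        fun h => ⟨⟨by rw [h.1, h.2]; exact ha, h.2⟩, h.1⟩⟩)]
    exact (hfib a (ne_of_lt ha)).symm
  rw [Finset.mul_sum, Finset.sum_congr rfl h2, Finset.sum_const, smul_eq_mul]
  congr 1
  rw [Finset.filter_congr (fun a _ => Fin.lt_def)]
  exact card_fin_filter_lt (b : ℕ) b.is_lt.le

end Counting2

section Main

variable {α : Type} [Fintype α] [DecidableEq α] {B : ℕ}

lemma count_weighted (j0 k : α) (hkj : k ≠ j0) (b₀ : Fin B) (m : ℕ) (hm : m ≤ B) :
    (B - 1) * (univ.filter fun s : α ≃ Fin B => s k < s j0 ∧ ((s j0 : ℕ) < m)).card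
      = (∑ i ∈ range m, i) * (univ.filter fun s : α ≃ Fin B => s j0 = b₀).card := by
  rw [Finset.card_eq_sum_card_fiberwise
      (f := fun s : α ≃ Fin B => s j0) (t := univ.filter (fun b : Fin B => (b : ℕ) < m))
      (fun s hs => by
        simp only [mem_coe, mem_filter, mem_univ, true_and] at hs ⊢; exact hs.2)]
  rw [Finset.mul_sum]
  have h1 : ∀ b ∈ univ.filter (fun b : Fin B => (b : ℕ) < m),
      (B - 1) * ((univ.filter fun s : α ≃ Fin B => s k < s j0 ∧ ((s j0 : ℕ) < m)).filter
          (fun s => s j0 = b)).card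
        = (b : ℕ) * (univ.filter fun s : α ≃ Fin B => s j0 = b₀).card := by
    intro b hb
    simp only [mem_filter, mem_univ, true_and] at hb
    rw [Finset.filter_filter]
    rw [Finset.filter_congr (q := fun s : α ≃ Fin B => s k < s j0 ∧ s j0 = b)
      (fun s _ => ⟨fun h => ⟨h.1.1, h.2⟩, fun h => ⟨⟨h.1, by rw [h.2]; exact hb⟩, h.2⟩⟩)]
    rw [count_pair k j0 hkj b, cnt1_const j0 b b₀]
  rw [Finset.sum_congr rfl h1]
  rw [sum_fin_filter_lt (fun i => i * (univ.filter fun s : α ≃ Fin B => s j0 = b₀).card) m hm]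
  rw [← Finset.sum_mul]

lemma count_main_s17 (hB : 2 ≤ B) (hcard : Fintype.card α = B) (j0 : α) (f : α → ℝ)
    (hf : ∀ k, 0 ≤ f k) (m : ℕ) (hm1 : 1 ≤ m) (hmB : m ≤ B) :
    ((m : ℝ) * ((B : ℝ) - 1) - (m : ℝ) * ((m : ℝ) - 1) * ∑ k, f k) *
        (Nat.card (α ≃ Fin B) : ℝ)
      ≤ (B : ℝ) * ((B : ℝ) - 1) *
        (Nat.card {s : α ≃ Fin B // (∑ k, if s k < s j0 then f k else 0) ≤ 1 / 2} : ℝ) := by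
  classical
  have hb0 : 0 < B := by omega
  set b₀ : Fin B := ⟨0, hb0⟩ with hb₀
  set c1 : ℕ := (univ.filter fun s : α ≃ Fin B => s j0 = b₀).card with hc1
  set K : (α ≃ Fin B) → ℝ := fun s => ∑ k, if s k < s j0 then f k else 0 with hK
  set G : ℕ := ∑ i ∈ range m, i with hG
  set S : ℝ := ∑ k, f k with hS
  have hSnn : 0 ≤ S := Finset.sum_nonneg fun k _ => hf k
  have hDen : (Nat.card (α ≃ Fin B)) = B * c1 := by
    rw [Nat.card_eq_fintype_card, ← Finset.card_univ]
    exact count_univ j0 b₀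
  have hNum : (Nat.card {s : α ≃ Fin B // K s ≤ 1 / 2})
      = (univ.filter fun s : α ≃ Fin B => K s ≤ 1 / 2).card := by
    rw [Nat.card_eq_fintype_card, Fintype.card_subtype]
  set P : Finset (α ≃ Fin B) := univ.filter (fun s => ((s j0 : ℕ) < m)) with hP
  have hPcard : P.card = m * c1 := count_prefix j0 b₀ m hmB
  set bad : Finset (α ≃ Fin B) := P.filter (fun s => ¬ (K s ≤ 1/2)) with hbad
  set good : Finset (α ≃ Fin B) := univ.filter (fun s => K s ≤ 1/2) with hgood
  have hsplit : P.card ≤ bad.card + good.card := by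
    refine le_trans (Finset.card_le_card ?_) (Finset.card_union_le _ _)
    intro s hs
    by_cases h : K s ≤ 1/2
    · exact Finset.mem_union.mpr (Or.inr (mem_filter.mpr ⟨mem_univ _, h⟩))
    · exact Finset.mem_union.mpr (Or.inl (mem_filter.mpr ⟨hs, h⟩))
  have hKnn : ∀ s, 0 ≤ K s := by
    intro s
    refine Finset.sum_nonneg fun k _ => ?_
    by_cases h : s k < s j0 <;> simp [h, hf k]
  set W : ℝ := ∑ s ∈ P, K s with hW
  have hWnn : 0 ≤ W := Finset.sum_nonneg fun s _ => hKnn s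
  have hbadcard : ((bad.card : ℝ)) ≤ 2 * W := by
    have h1 : (bad.card : ℝ) = ∑ s ∈ bad, (1 : ℝ) := by simp
    have h2 : ∑ s ∈ bad, (1 : ℝ) ≤ ∑ s ∈ bad, 2 * K s := by
      refine Finset.sum_le_sum fun s hs => ?_
      have := (mem_filter.mp hs).2
      push_neg at this
      linarith
    have h3 : ∑ s ∈ bad, 2 * K s ≤ ∑ s ∈ P, 2 * K s := by
      refine Finset.sum_le_sum_of_subset_of_nonneg (Finset.filter_subset _ _)
        fun s _ _ => by linarith [hKnn s]
    rw [h1]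
    refine le_trans h2 (le_trans h3 ?_)
    rw [← Finset.mul_sum]
  -- the weighted bound
  have hBsub : ((B - 1 : ℕ) : ℝ) = (B : ℝ) - 1 := by
    push_cast [Nat.cast_sub (by omega : 1 ≤ B)]; ring
  have hWbound : ((B : ℝ) - 1) * W ≤ (G : ℝ) * (c1 : ℝ) * S := by
    have hswap : W = ∑ k, ∑ s ∈ P, (if s k < s j0 then f k else 0) := by
      rw [hW]
      exact Finset.sum_comm
    have hterm : ∀ k : α,
        ((B : ℝ) - 1) * (∑ s ∈ P, (if s k < s j0 then f k else 0))
          ≤ (G : ℝ) * (c1 : ℝ) * f k := by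
      intro k
      have hfilter : P.filter (fun s => s k < s j0)
          = univ.filter fun s : α ≃ Fin B => s k < s j0 ∧ ((s j0 : ℕ) < m) := by
        rw [hP, Finset.filter_filter]
        exact Finset.filter_congr fun s _ => and_comm
      have hsum_ite : ∑ s ∈ P, (if s k < s j0 then f k else 0)
          = ((P.filter (fun s => s k < s j0)).card : ℝ) * f k := by
        rw [← Finset.sum_filter, Finset.sum_const, nsmul_eq_mul]
      rw [hsum_ite, hfilter]
      by_cases hkj : k = j0
      · have : (univ.filter fun s : α ≃ Fin B => s k < s j0 ∧ ((s j0 : ℕ) < m)) = ∅ := by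
          refine Finset.filter_false_of_mem fun s _ => ?_
          rw [hkj]
          exact fun h => lt_irrefl _ h.1
        rw [this]
        simp only [Finset.card_empty, Nat.cast_zero, zero_mul, mul_zero]
        exact mul_nonneg (mul_nonneg (Nat.cast_nonneg _) (Nat.cast_nonneg _)) (hf k)
      · have hnat := count_weighted j0 k hkj b₀ m hmB
        have hreal : ((B : ℝ) - 1) *
            ((univ.filter fun s : α ≃ Fin B => s k < s j0 ∧ ((s j0 : ℕ) < m)).card : ℝ)
              = (G : ℝ) * (c1 : ℝ) := by
          rw [← hBsub, ← Nat.cast_mul, hnat, hG, hc1]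
          push_cast
          ring
        refine le_of_eq ?_
        rw [← hreal]
        ring
    calc ((B : ℝ) - 1) * W = ∑ k, ((B : ℝ) - 1) * ∑ s ∈ P, (if s k < s j0 then f k else 0) := by
          rw [hswap, Finset.mul_sum]
      _ ≤ ∑ k, (G : ℝ) * (c1 : ℝ) * f k := Finset.sum_le_sum fun k _ => hterm k
      _ = (G : ℝ) * (c1 : ℝ) * S := by rw [hS, Finset.mul_sum]
  -- Gauss sum
  have hGauss : 2 * (G : ℝ) = (m : ℝ) * ((m : ℝ) - 1) := by
    have := Finset.sum_range_id_mul_two m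
    have h2 : ((∑ i ∈ range m, i) * 2 : ℕ) = (m * (m - 1) : ℕ) := this
    have h3 : ((m : ℝ) - 1) = ((m - 1 : ℕ) : ℝ) := by
      push_cast [Nat.cast_sub hm1]; ring
    rw [h3, ← Nat.cast_mul, ← h2, hG]
    push_cast
    ring
  -- final assembly
  rw [hNum, hDen]
  have hc1nn : (0 : ℝ) ≤ (c1 : ℝ) := Nat.cast_nonneg _
  have hBR : (2 : ℝ) ≤ (B : ℝ) := by exact_mod_cast hB
  have f1 : ((m : ℝ) * (c1 : ℝ)) ≤ (bad.card : ℝ) + (good.card : ℝ) := by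
    have := hsplit
    rw [hPcard] at this
    exact_mod_cast this
  have t1 : ((B : ℝ) - 1) * (bad.card : ℝ) ≤ (m : ℝ) * ((m : ℝ) - 1) * ((c1 : ℝ) * S) := by
    have u1 : ((B : ℝ) - 1) * (bad.card : ℝ) ≤ ((B : ℝ) - 1) * (2 * W) :=
      mul_le_mul_of_nonneg_left hbadcard (by linarith)
    have u2 : ((B : ℝ) - 1) * (2 * W) = 2 * (((B : ℝ) - 1) * W) := by ring
    have u3 : 2 * (((B : ℝ) - 1) * W) ≤ 2 * ((G : ℝ) * (c1 : ℝ) * S) := by linarith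
    have u4 : 2 * ((G : ℝ) * (c1 : ℝ) * S) = (m : ℝ) * ((m : ℝ) - 1) * ((c1 : ℝ) * S) := by
      linear_combination ((c1 : ℝ) * S) * hGauss
    linarith
  have t2 : (B : ℝ) * (((B : ℝ) - 1) * (bad.card : ℝ))
      ≤ (B : ℝ) * ((m : ℝ) * ((m : ℝ) - 1) * ((c1 : ℝ) * S)) :=
    mul_le_mul_of_nonneg_left t1 (by linarith)
  have t3 : ((B : ℝ) * ((B : ℝ) - 1)) * ((m : ℝ) * (c1 : ℝ))
      ≤ ((B : ℝ) * ((B : ℝ) - 1)) * ((bad.card : ℝ) + (good.card : ℝ)) :=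
    mul_le_mul_of_nonneg_left f1 (by nlinarith)
  push_cast
  nlinarith [t2, t3]

end Main

end CountingInfra

set_option maxHeartbeats 2000000 in
/-- In the random-pruning setup, let `x_j` be a `w`-neighbor of `x_i`. Then, with respect
to the uniformly random labelling of the `w`-neighbors of `x_i`,
`ℙ(K_ij ≤ 1/2) ≥ min{1, (1/4)·min_{l∈Λ} N_{w,l}/min(B_w^{x_i}, B_l^{x_j})}`, where
`N_{w,l} = 1/(2(n+1)q_{w,l})`, `R_{w,l} = {x_k ∈ C : d(x_i,x_k) = w, d(x_j,x_k) = l}`,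
`Λ = {l ∈ {0,…,n} : |R_{w,l}| > N_{w,l}}`, and where the minimum over the empty set
`Λ = ∅` is interpreted so that the right-hand side equals `1`. -/
theorem prob_K_le_half {n : ℕ} (p : ℝ) (hp : 0 < p) (hp' : p < 1/2)
    (C : Finset (Fin n → ZMod 2)) (w t : ℕ) (hw : Even w)
    (ht : (t : ℝ) = (w : ℝ) / 2 + p * ((n : ℝ) - (w : ℝ)))
    (xi xj : Fin n → ZMod 2) (hxi : xi ∈ C) (hxj : xj ∈ C)
    (hij : hammingDist xi xj = w) (hj : xj ∈ nbrs C xi w)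
    (q : ℕ → ℝ)
    (hq : ∀ l : ℕ, ∀ xk ∈ C, hammingDist xi xk = w → hammingDist xj xk = l →
      condP p xi xj xk t = q l)
    (Λ : Finset ℕ)
    (hΛ : Λ = (Finset.range (n+1)).filter fun l =>
      1 / (2 * ((n : ℝ) + 1) * q l)
        < ((C.filter fun c => hammingDist xi c = w ∧ hammingDist xj c = l).card : ℝ)) :
    (Λ = ∅ →
      1 ≤ ((Nat.card {s : {c // c ∈ nbrs C xi w} ≃ Fin (nbrs C xi w).card //
              Kij p C xi xj w t hj s ≤ 1/2} : ℝ) /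
            (Nat.card ({c // c ∈ nbrs C xi w} ≃ Fin (nbrs C xi w).card) : ℝ))) ∧
    (∀ hne : Λ.Nonempty,
      min 1 ((1/4) * Λ.inf' hne (fun l =>
          (1 / (2 * ((n : ℝ) + 1) * q l)) /
            min ((nbrs C xi w).card : ℝ) ((nbrs C xj l).card : ℝ)))
        ≤ ((Nat.card {s : {c // c ∈ nbrs C xi w} ≃ Fin (nbrs C xi w).card //
              Kij p C xi xj w t hj s ≤ 1/2} : ℝ) /
            (Nat.card ({c // c ∈ nbrs C xi w} ≃ Fin (nbrs C xi w).card) : ℝ))) := by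
    classical
  set Rl : ℕ → Finset (Fin n → ZMod 2) :=
    fun l => C.filter fun c => hammingDist xi c = w ∧ hammingDist xj c = l with hRl
  -- nonnegativity of condP
  have hPxnn : ∀ (x : Fin n → ZMod 2) (Y : Finset (Fin n → ZMod 2)), 0 ≤ Px (n := n) p x Y := by
    intro x Y
    rw [Px]
    exact Finset.sum_nonneg fun y _ =>
      mul_nonneg (pow_nonneg hp.le _) (pow_nonneg (by linarith) _)
  have hcond : ∀ xk, 0 ≤ condP p xi xj xk t := by
    intro xk
    rw [condP]
    exact div_nonneg (hPxnn _ _) (hPxnn _ _)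
  -- the total sum S and its fiberwise decomposition
  set S : ℝ := ∑ k ∈ (nbrs C xi w).attach, condP p xi xj k.1 t with hSdef
  have hSnn : 0 ≤ S := Finset.sum_nonneg fun k _ => hcond _
  have hKle : ∀ s : {c // c ∈ nbrs C xi w} ≃ Fin (nbrs C xi w).card,
      Kij p C xi xj w t hj s ≤ S := by
    intro s
    rw [Kij, hSdef]
    refine Finset.sum_le_sum fun k _ => ?_
    split_ifs
    · exact le_refl _
    · exact hcond _
  have hmemnbrs : ∀ k : {c // c ∈ nbrs C xi w},
      k.1 ∈ C ∧ hammingDist xi k.1 = w := by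
    intro k
    have := k.2
    simp only [nbrs, Finset.mem_filter] at this
    exact this
  have hSdecomp : S = ∑ l ∈ Finset.range (n+1), ((Rl l).card : ℝ) * q l := by
    rw [hSdef, ← Finset.sum_fiberwise_of_maps_to
      (g := fun k : {c // c ∈ nbrs C xi w} => hammingDist xj k.1)
      (t := Finset.range (n+1))
      (fun k _ => Finset.mem_range.mpr (Nat.lt_succ_of_le
        (le_trans hammingDist_le_card_fintype (le_of_eq (Fintype.card_fin n))))) _]
    refine Finset.sum_congr rfl fun l hl => ?_
    have hterm : ∀ k ∈ (nbrs C xi w).attach.filter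
        (fun k => hammingDist xj k.1 = l), condP p xi xj k.1 t = q l := by
      intro k hk
      have hk2 := (Finset.mem_filter.mp hk).2
      exact hq l k.1 (hmemnbrs k).1 (hmemnbrs k).2 hk2
    rw [Finset.sum_congr rfl hterm, Finset.sum_const, nsmul_eq_mul]
    congr 1
    rw [Finset.filter_attach (fun c => hammingDist xj c = l) (nbrs C xi w),
      Finset.card_map, Finset.card_attach]
    congr 1
    simp only [hRl, nbrs, Finset.filter_filter]
  have hqnn : ∀ l, (Rl l).Nonempty → 0 ≤ q l := by
    intro l ⟨c, hc⟩
    rw [hRl, Finset.mem_filter] at hc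
    rw [← hq l c hc.1 hc.2.1 hc.2.2]
    exact hcond c
  -- positivity of the denominator
  have hxjA : xj ∈ nbrs C xi w := hj
  have hB1 : 1 ≤ (nbrs C xi w).card := Finset.card_pos.mpr ⟨xj, hj⟩
  have hcardα : Fintype.card {c // c ∈ nbrs C xi w} = (nbrs C xi w).card :=
    Fintype.card_coe _
  have hEne : Nonempty ({c // c ∈ nbrs C xi w} ≃ Fin (nbrs C xi w).card) :=
    ⟨Fintype.equivFinOfCardEq hcardα⟩
  have hDenpos : (0 : ℝ) <
      (Nat.card ({c // c ∈ nbrs C xi w} ≃ Fin (nbrs C xi w).card) : ℝ) := by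
    have := Nat.card_pos (α := {c // c ∈ nbrs C xi w} ≃ Fin (nbrs C xi w).card)
    exact_mod_cast this
  -- when K is always at most 1/2 the ratio is 1
  have hratio_one : (∀ s : {c // c ∈ nbrs C xi w} ≃ Fin (nbrs C xi w).card,
      Kij p C xi xj w t hj s ≤ 1/2) →
      ((Nat.card {s : {c // c ∈ nbrs C xi w} ≃ Fin (nbrs C xi w).card //
            Kij p C xi xj w t hj s ≤ 1/2} : ℝ) /
          (Nat.card ({c // c ∈ nbrs C xi w} ≃ Fin (nbrs C xi w).card) : ℝ)) = 1 := by
    intro hall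
    rw [Nat.card_congr (Equiv.subtypeUnivEquiv hall)]
    rw [div_self (ne_of_gt hDenpos)]
  have hrationn : (0 : ℝ) ≤
      ((Nat.card {s : {c // c ∈ nbrs C xi w} ≃ Fin (nbrs C xi w).card //
            Kij p C xi xj w t hj s ≤ 1/2} : ℝ) /
          (Nat.card ({c // c ∈ nbrs C xi w} ≃ Fin (nbrs C xi w).card) : ℝ)) :=
    div_nonneg (Nat.cast_nonneg _) (Nat.cast_nonneg _)
  constructor
  · -- the case Λ = ∅
    intro hempty
    have hRle : ∀ l ∈ Finset.range (n+1),
        ((Rl l).card : ℝ) * q l ≤ 1 / (2*((n:ℝ)+1)) := by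
      intro l hl
      have hnot : ¬ (1 / (2*((n:ℝ)+1) * q l) < ((Rl l).card : ℝ)) := by
        intro hlt
        have : l ∈ Λ := by
          rw [hΛ]
          exact Finset.mem_filter.mpr ⟨hl, hlt⟩
        rw [hempty] at this
        exact absurd this (Finset.notMem_empty l)
      push_neg at hnot
      rcases Nat.eq_zero_or_pos (Rl l).card with h0 | hpos
      · rw [h0]
        simp only [Nat.cast_zero, zero_mul]
        positivity
      · have hne : (Rl l).Nonempty := Finset.card_pos.mp hpos
        have hq0 : 0 ≤ q l := hqnn l hne
        rcases eq_or_lt_of_le hq0 with he | hq0'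
        · rw [← he, mul_zero]
          positivity
        · have h2 := mul_le_mul_of_nonneg_right hnot hq0
          calc ((Rl l).card : ℝ) * q l ≤ (1 / (2*((n:ℝ)+1) * q l)) * q l := h2
            _ = 1 / (2*((n:ℝ)+1)) := by
                field_simp
    have hShalf : S ≤ 1/2 := by
      rw [hSdecomp]
      calc ∑ l ∈ Finset.range (n+1), ((Rl l).card : ℝ) * q l
          ≤ ∑ l ∈ Finset.range (n+1), 1 / (2*((n:ℝ)+1)) := Finset.sum_le_sum hRle
        _ = ((n:ℝ)+1) * (1 / (2*((n:ℝ)+1))) := by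
            rw [Finset.sum_const, Finset.card_range, nsmul_eq_mul]
            push_cast
            ring
        _ = 1/2 := by
            have : ((n:ℝ)+1) ≠ 0 := by positivity
            field_simp
    rw [hratio_one (fun s => le_trans (hKle s) hShalf)]
  · -- the case Λ ≠ ∅
    intro hne
    set g : ℕ → ℝ := fun l =>
      (1 / (2 * ((n : ℝ) + 1) * q l)) /
        min ((nbrs C xi w).card : ℝ) ((nbrs C xj l).card : ℝ) with hg
    set rr : ℝ := Λ.inf' hne g with hrr
    by_cases hrpos : 0 < rr
    swap
    · push_neg at hrpos
      have h1 : min 1 ((1/4) * rr) ≤ (1/4) * rr := min_le_right _ _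
      have h2 : (1/4 : ℝ) * rr ≤ 0 := by linarith
      linarith [hrationn]
    · have hmem : ∀ l ∈ Λ, l ∈ Finset.range (n+1) ∧
          1 / (2 * ((n : ℝ) + 1) * q l) < ((Rl l).card : ℝ) := by
        intro l hl
        rw [hΛ] at hl
        exact Finset.mem_filter.mp hl
      have hinfle : ∀ l ∈ Λ, rr ≤ g l := fun l hl => Finset.inf'_le g hl
      have hRsubB : ∀ l, ((Rl l).card : ℝ) ≤ ((nbrs C xi w).card : ℝ) := by
        intro l
        have hsub : Rl l ⊆ nbrs C xi w := by
          intro c hc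
          simp only [hRl, Finset.mem_filter] at hc
          simp only [nbrs, Finset.mem_filter]
          exact ⟨hc.1, hc.2.1⟩
        exact_mod_cast Finset.card_le_card hsub
      have hRsubj : ∀ l, ((Rl l).card : ℝ) ≤ ((nbrs C xj l).card : ℝ) := by
        intro l
        have hsub : Rl l ⊆ nbrs C xj l := by
          intro c hc
          simp only [hRl, Finset.mem_filter] at hc
          simp only [nbrs, Finset.mem_filter]
          exact ⟨hc.1, hc.2.2⟩
        exact_mod_cast Finset.card_le_card hsub
      -- key facts for l ∈ Λ
      have hkey : ∀ l ∈ Λ, ((Rl l).card : ℝ) * q l ≤ 1 / (2 * ((n : ℝ) + 1) * rr) ∧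
          1 / (2 * ((n : ℝ) + 1) * q l)
            < min ((nbrs C xi w).card : ℝ) ((nbrs C xj l).card : ℝ) := by
        intro l hl
        obtain ⟨hlr, hlN⟩ := hmem l hl
        have hgl : rr ≤ g l := hinfle l hl
        have hMnn : (0:ℝ) ≤ min ((nbrs C xi w).card : ℝ) ((nbrs C xj l).card : ℝ) :=
          le_min (Nat.cast_nonneg _) (Nat.cast_nonneg _)
        have hMpos : (0:ℝ) < min ((nbrs C xi w).card : ℝ) ((nbrs C xj l).card : ℝ) := by
          rcases eq_or_lt_of_le hMnn with h0 | h
          · exfalso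
            rw [hg] at hgl
            simp only at hgl
            rw [← h0, div_zero] at hgl
            linarith
          · exact h
        have hcardM : ((Rl l).card : ℝ)
            ≤ min ((nbrs C xi w).card : ℝ) ((nbrs C xj l).card : ℝ) :=
          le_min (hRsubB l) (hRsubj l)
        have hgl' : rr * min ((nbrs C xi w).card : ℝ) ((nbrs C xj l).card : ℝ)
            ≤ 1 / (2 * ((n : ℝ) + 1) * q l) := by
          rw [hg] at hgl
          simp only at hgl
          exact (le_div_iff₀ hMpos).mp hgl
        have hNpos : 0 < 1 / (2 * ((n : ℝ) + 1) * q l) :=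
          lt_of_lt_of_le (mul_pos hrpos hMpos) hgl'
        have hqpos : 0 < q l := by
          by_contra hq0
          push_neg at hq0
          have h2n : (0:ℝ) < 2 * ((n : ℝ) + 1) := by positivity
          have : 2 * ((n : ℝ) + 1) * q l ≤ 0 := by nlinarith
          have := one_div_nonpos.mpr this
          linarith
        constructor
        · have hMN : min ((nbrs C xi w).card : ℝ) ((nbrs C xj l).card : ℝ)
              ≤ (1 / (2 * ((n : ℝ) + 1) * q l)) / rr := by
            rw [le_div_iff₀ hrpos]
            calc min ((nbrs C xi w).card : ℝ) ((nbrs C xj l).card : ℝ) * rr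
                = rr * min ((nbrs C xi w).card : ℝ) ((nbrs C xj l).card : ℝ) := by ring
              _ ≤ 1 / (2 * ((n : ℝ) + 1) * q l) := hgl'
          have step1 : ((Rl l).card : ℝ) * q l
              ≤ ((1 / (2 * ((n : ℝ) + 1) * q l)) / rr) * q l :=
            mul_le_mul_of_nonneg_right (le_trans hcardM hMN) hqpos.le
          refine le_trans step1 (le_of_eq ?_)
          have hq0 : q l ≠ 0 := ne_of_gt hqpos
          have hr0 : rr ≠ 0 := ne_of_gt hrpos
          have hn0 : ((n:ℝ)+1) ≠ 0 := by positivity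
          field_simp
        · exact lt_of_lt_of_le hlN hcardM
      -- rr < 1
      have hr1 : rr < 1 := by
        obtain ⟨l0, hl0, hreq⟩ := Finset.exists_mem_eq_inf' hne g
        have h2 := (hkey l0 hl0).2
        have hMnn : (0:ℝ) ≤ min ((nbrs C xi w).card : ℝ) ((nbrs C xj l0).card : ℝ) :=
          le_min (Nat.cast_nonneg _) (Nat.cast_nonneg _)
        have hMpos : (0:ℝ) < min ((nbrs C xi w).card : ℝ) ((nbrs C xj l0).card : ℝ) := by
          rcases eq_or_lt_of_le hMnn with h0 | h
          · exfalso
            have : rr = g l0 := hreq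
            rw [hg] at this
            simp only at this
            rw [← h0, div_zero] at this
            linarith
          · exact h
        have : rr = g l0 := hreq
        rw [hg] at this
        simp only at this
        rw [this]
        exact (div_lt_one hMpos).mpr h2
      -- the uniform per-level bound
      have hRler : ∀ l ∈ Finset.range (n+1),
          ((Rl l).card : ℝ) * q l ≤ 1 / (2 * ((n : ℝ) + 1) * rr) := by
        intro l hl
        by_cases hlΛ : l ∈ Λ
        · exact (hkey l hlΛ).1
        · have hnot : ¬ (1 / (2*((n:ℝ)+1) * q l) < ((Rl l).card : ℝ)) := by
            intro hlt
            exact hlΛ (by rw [hΛ]; exact Finset.mem_filter.mpr ⟨hl, hlt⟩)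
          push_neg at hnot
          have h2nr : (0:ℝ) < 2 * ((n : ℝ) + 1) * rr := by
            have : (0:ℝ) < 2 * ((n : ℝ) + 1) := by positivity
            exact mul_pos this hrpos
          rcases Nat.eq_zero_or_pos (Rl l).card with h0 | hpos
          · rw [h0]
            simp only [Nat.cast_zero, zero_mul]
            exact le_of_lt (one_div_pos.mpr h2nr)
          · have hneR : (Rl l).Nonempty := Finset.card_pos.mp hpos
            have hq0 : 0 ≤ q l := hqnn l hneR
            rcases eq_or_lt_of_le hq0 with he | hq0'
            · rw [← he, mul_zero]
              exact le_of_lt (one_div_pos.mpr h2nr)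
            · have h2 := mul_le_mul_of_nonneg_right hnot hq0
              have heq : (1 / (2*((n:ℝ)+1) * q l)) * q l = 1 / (2*((n:ℝ)+1)) := by
                field_simp
              have h3 : ((Rl l).card : ℝ) * q l ≤ 1 / (2*((n:ℝ)+1)) := by
                rw [← heq]; exact h2
              refine le_trans h3 (one_div_le_one_div_of_le ?_ ?_)
              · have : (0:ℝ) < 2 * ((n : ℝ) + 1) := by positivity
                exact mul_pos this hrpos
              · nlinarith [hr1, hrpos]
      have hSr : S ≤ 1 / (2 * rr) := by
        rw [hSdecomp]
        calc ∑ l ∈ Finset.range (n+1), ((Rl l).card : ℝ) * q l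
            ≤ ∑ _l ∈ Finset.range (n+1), 1 / (2 * ((n:ℝ)+1) * rr) :=
              Finset.sum_le_sum hRler
          _ = ((n:ℝ)+1) * (1 / (2 * ((n:ℝ)+1) * rr)) := by
              rw [Finset.sum_const, Finset.card_range, nsmul_eq_mul]
              push_cast
              ring
          _ = 1 / (2 * rr) := by
              have h1 : ((n:ℝ)+1) ≠ 0 := by positivity
              have h2 : rr ≠ 0 := ne_of_gt hrpos
              field_simp
      -- now the counting argument
      by_cases hB2 : 2 ≤ (nbrs C xi w).card
      swap
      · -- only one neighbor: K is always 0
        have hBeq : (nbrs C xi w).card = 1 := by omega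
        have hK0 : ∀ s : {c // c ∈ nbrs C xi w} ≃ Fin (nbrs C xi w).card,
            Kij p C xi xj w t hj s ≤ 1/2 := by
          intro s
          rw [Kij]
          have hz : ∀ k ∈ (nbrs C xi w).attach,
              (if s k < s ⟨xj, hj⟩ then condP p xi xj k.1 t else 0) = 0 := by
            intro k _
            have hk : k = (⟨xj, hj⟩ : {c // c ∈ nbrs C xi w}) := by
              obtain ⟨a, ha⟩ := Finset.card_eq_one.mp hBeq
              have h1 : (k.1 : Fin n → ZMod 2) ∈ ({a} : Finset (Fin n → ZMod 2)) := by
                rw [← ha]; exact k.2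
              have hxj' : xj ∈ ({a} : Finset (Fin n → ZMod 2)) := by
                rw [← ha]; exact hj
              rw [Finset.mem_singleton] at h1 hxj'
              exact Subtype.ext (h1.trans hxj'.symm)
            rw [hk]
            simp
          rw [Finset.sum_congr rfl hz, Finset.sum_const, smul_zero]
          norm_num
        rw [hratio_one hK0]
        exact min_le_left _ _
      · -- at least two neighbors
        have hBR : (2:ℝ) ≤ ((nbrs C xi w).card : ℝ) := by exact_mod_cast hB2
        have hKijeq : ∀ s : {c // c ∈ nbrs C xi w} ≃ Fin (nbrs C xi w).card,
            Kij p C xi xj w t hj s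
              = ∑ k : {c // c ∈ nbrs C xi w},
                  (if s k < s ⟨xj, hj⟩ then condP p xi xj k.1 t else 0) := by
          intro s
          rw [Kij, Finset.univ_eq_attach]
        have hNumcongr : Nat.card {s : {c // c ∈ nbrs C xi w} ≃ Fin (nbrs C xi w).card //
              Kij p C xi xj w t hj s ≤ 1/2}
            = Nat.card {s : {c // c ∈ nbrs C xi w} ≃ Fin (nbrs C xi w).card //
              (∑ k : {c // c ∈ nbrs C xi w},
                  (if s k < s ⟨xj, hj⟩ then condP p xi xj k.1 t else 0)) ≤ 1/2} :=
          Nat.card_congr (Equiv.subtypeEquivRight fun s => by rw [hKijeq s])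
        have hSuniv : ∑ k : {c // c ∈ nbrs C xi w}, condP p xi xj k.1 t = S := by
          rw [hSdef, Finset.univ_eq_attach]
        rw [hNumcongr, le_div_iff₀ hDenpos]
        have hDennn : (0:ℝ) ≤
            (Nat.card ({c // c ∈ nbrs C xi w} ≃ Fin (nbrs C xi w).card) : ℝ) :=
          le_of_lt hDenpos
        have hBBpos : (0:ℝ) < ((nbrs C xi w).card : ℝ) * (((nbrs C xi w).card : ℝ) - 1) := by
          nlinarith
        by_cases hScase : S ≤ (((nbrs C xi w).card : ℝ) - 1) / (2 * ((nbrs C xi w).card : ℝ))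
        · -- take m = B
          have hC := count_main_s17 hB2 hcardα (⟨xj, hj⟩ : {c // c ∈ nbrs C xi w})
            (fun k => condP p xi xj k.1 t) (fun k => hcond _)
            (nbrs C xi w).card (by omega) (le_refl _)
          rw [hSuniv] at hC
          have h1 : (1 - S) *
              (Nat.card ({c // c ∈ nbrs C xi w} ≃ Fin (nbrs C xi w).card) : ℝ)
              ≤ (Nat.card {s : {c // c ∈ nbrs C xi w} ≃ Fin (nbrs C xi w).card //
                  (∑ k : {c // c ∈ nbrs C xi w},
                    (if s k < s ⟨xj, hj⟩ then condP p xi xj k.1 t else 0)) ≤ 1/2} : ℝ) := by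
            refine le_of_mul_le_mul_left ?_ hBBpos
            calc ((nbrs C xi w).card : ℝ) * (((nbrs C xi w).card : ℝ) - 1) *
                  ((1 - S) * (Nat.card ({c // c ∈ nbrs C xi w} ≃ Fin (nbrs C xi w).card) : ℝ))
                = (((nbrs C xi w).card : ℝ) * (((nbrs C xi w).card : ℝ) - 1)
                    - ((nbrs C xi w).card : ℝ) * (((nbrs C xi w).card : ℝ) - 1) * S) *
                  (Nat.card ({c // c ∈ nbrs C xi w} ≃ Fin (nbrs C xi w).card) : ℝ) := by ring
              _ ≤ _ := hC
          have h2 : min 1 ((1/4) * rr) ≤ 1 - S := by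
            have : (((nbrs C xi w).card : ℝ) - 1) / (2 * ((nbrs C xi w).card : ℝ)) ≤ 1/2 := by
              rw [div_le_iff₀ (by linarith : (0:ℝ) < 2 * ((nbrs C xi w).card : ℝ))]
              linarith
            have h3 : min 1 ((1/4) * rr) ≤ (1/4) * rr := min_le_right _ _
            linarith
          calc min 1 ((1/4) * rr) *
                (Nat.card ({c // c ∈ nbrs C xi w} ≃ Fin (nbrs C xi w).card) : ℝ)
              ≤ (1 - S) * (Nat.card ({c // c ∈ nbrs C xi w} ≃ Fin (nbrs C xi w).card) : ℝ) :=
                mul_le_mul_of_nonneg_right h2 hDennn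
            _ ≤ _ := h1
        · -- take m = ⌈(B-1)/(2S)⌉
          push_neg at hScase
          have hSpos : 0 < S := by
            have : (0:ℝ) < (((nbrs C xi w).card : ℝ) - 1) / (2 * ((nbrs C xi w).card : ℝ)) :=
              div_pos (by linarith) (by linarith)
            linarith
          set x : ℝ := (((nbrs C xi w).card : ℝ) - 1) / (2 * S) with hx
          have hxpos : 0 < x := div_pos (by linarith) (by linarith)
          set m : ℕ := ⌈x⌉₊ with hm
          have hm1 : 1 ≤ m := Nat.one_le_iff_ne_zero.mpr (by
            have := Nat.ceil_pos.mpr hxpos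
            omega)
          have hxB : x ≤ ((nbrs C xi w).card : ℝ) := by
            rw [hx, div_le_iff₀ (by linarith : (0:ℝ) < 2 * S)]
            rw [div_lt_iff₀ (by linarith : (0:ℝ) < 2 * ((nbrs C xi w).card : ℝ))] at hScase
            nlinarith
          have hmB : m ≤ (nbrs C xi w).card := Nat.ceil_le.mpr hxB
          have hmlow : x ≤ (m:ℝ) := Nat.le_ceil x
          have hmhigh : (m:ℝ) < x + 1 := Nat.ceil_lt_add_one hxpos.le
          have hC := count_main_s17 hB2 hcardα (⟨xj, hj⟩ : {c // c ∈ nbrs C xi w})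
            (fun k => condP p xi xj k.1 t) (fun k => hcond _) m hm1 hmB
          rw [hSuniv] at hC
          have hmR : (1:ℝ) ≤ (m:ℝ) := by exact_mod_cast hm1
          have e1 : x * S = (((nbrs C xi w).card : ℝ) - 1) / 2 := by
            rw [hx]
            field_simp
          have e2 : ((m:ℝ) - 1) * S ≤ (((nbrs C xi w).card : ℝ) - 1) / 2 := by
            nlinarith
          have e3 : rr * (2 * S) ≤ 1 := by
            rw [le_div_iff₀ (by linarith : (0:ℝ) < 2 * rr)] at hSr
            nlinarith
          have e4 : rr * (((nbrs C xi w).card : ℝ) - 1) ≤ x := by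
            rw [hx, le_div_iff₀ (by linarith : (0:ℝ) < 2 * S)]
            nlinarith
          have key : (1/4) * rr * (((nbrs C xi w).card : ℝ) * (((nbrs C xi w).card : ℝ) - 1))
              ≤ (m:ℝ) * (((nbrs C xi w).card : ℝ) - 1) - (m:ℝ) * ((m:ℝ) - 1) * S := by
            have c1 : (m:ℝ) * ((m:ℝ) - 1) * S ≤ (m:ℝ) * ((((nbrs C xi w).card : ℝ) - 1) / 2) := by
              have := mul_le_mul_of_nonneg_left e2 (by linarith : (0:ℝ) ≤ (m:ℝ))
              nlinarith
            have c2 : x * ((((nbrs C xi w).card : ℝ) - 1) / 2)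
                ≤ (m:ℝ) * ((((nbrs C xi w).card : ℝ) - 1) / 2) :=
              mul_le_mul_of_nonneg_right hmlow (by linarith)
            have c3 : rr * (((nbrs C xi w).card : ℝ) - 1) * ((((nbrs C xi w).card : ℝ) - 1) / 2)
                ≤ x * ((((nbrs C xi w).card : ℝ) - 1) / 2) :=
              mul_le_mul_of_nonneg_right e4 (by linarith)
            have c4 : (1/4) * rr * (((nbrs C xi w).card : ℝ) * (((nbrs C xi w).card : ℝ) - 1))
                ≤ rr * (((nbrs C xi w).card : ℝ) - 1) * ((((nbrs C xi w).card : ℝ) - 1) / 2) := by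
              nlinarith [mul_nonneg (mul_nonneg hrpos.le
                (by linarith : (0:ℝ) ≤ ((nbrs C xi w).card : ℝ) - 1))
                (by linarith : (0:ℝ) ≤ ((nbrs C xi w).card : ℝ) - 2)]
            linarith
          have hfinal : ((1/4) * rr) *
              (Nat.card ({c // c ∈ nbrs C xi w} ≃ Fin (nbrs C xi w).card) : ℝ)
              ≤ (Nat.card {s : {c // c ∈ nbrs C xi w} ≃ Fin (nbrs C xi w).card //
                  (∑ k : {c // c ∈ nbrs C xi w},
                    (if s k < s ⟨xj, hj⟩ then condP p xi xj k.1 t else 0)) ≤ 1/2} : ℝ) := by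
            refine le_of_mul_le_mul_left ?_ hBBpos
            calc ((nbrs C xi w).card : ℝ) * (((nbrs C xi w).card : ℝ) - 1) *
                  (((1/4) * rr) *
                    (Nat.card ({c // c ∈ nbrs C xi w} ≃ Fin (nbrs C xi w).card) : ℝ))
                = ((1/4) * rr * (((nbrs C xi w).card : ℝ) * (((nbrs C xi w).card : ℝ) - 1))) *
                  (Nat.card ({c // c ∈ nbrs C xi w} ≃ Fin (nbrs C xi w).card) : ℝ) := by ring
              _ ≤ ((m:ℝ) * (((nbrs C xi w).card : ℝ) - 1) - (m:ℝ) * ((m:ℝ) - 1) * S) *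
                  (Nat.card ({c // c ∈ nbrs C xi w} ≃ Fin (nbrs C xi w).card) : ℝ) :=
                mul_le_mul_of_nonneg_right key hDennn
              _ ≤ _ := hC
          calc min 1 ((1/4) * rr) *
                (Nat.card ({c // c ∈ nbrs C xi w} ≃ Fin (nbrs C xi w).card) : ℝ)
              ≤ ((1/4) * rr) *
                (Nat.card ({c // c ∈ nbrs C xi w} ≃ Fin (nbrs C xi w).card) : ℝ) :=
                mul_le_mul_of_nonneg_right (min_le_right _ _) hDennn
            _ ≤ _ := hfinal
end

section
/- In the random-pruning setup, let x_j be a w-neighbor of x_i and suppose that for some realization of the random labelling K_ij > 1/2. Then there exists l ∈ {0,…,n} such that min(B_w^{x_i}, B_l^{x_j}) ≥ |R_{w,l}| > N_{w,l} = 1/(2(n+1)q_{w,l}). -/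
open Real

/-- In the random-pruning setup, let `x_j` be a `w`-neighbor of `x_i` and suppose that for
some realization `s` of the random labelling `K_ij > 1/2`. Then there exists
`l ∈ {0,…,n}` such that `min(B_w^{x_i}, B_l^{x_j}) ≥ |R_{w,l}| > N_{w,l} = 1/(2(n+1)q_{w,l})`,
where `q_{w,l}` is the common value of `P_{x_i}(X_{ik}|X_{ij})` over configurations with
`d(x_i,x_k) = w`, `d(x_j,x_k) = l`. -/
theorem nuisance_level_exists {n : ℕ} (p : ℝ) (hp : 0 < p) (hp' : p < 1/2)
    (C : Finset (Fin n → ZMod 2)) (w t : ℕ) (hw : Even w)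
    (ht : (t : ℝ) = (w : ℝ) / 2 + p * ((n : ℝ) - (w : ℝ)))
    (xi xj : Fin n → ZMod 2) (hxi : xi ∈ C) (hxj : xj ∈ C)
    (hij : hammingDist xi xj = w) (hj : xj ∈ nbrs C xi w)
    (q : ℕ → ℝ)
    (hq : ∀ l : ℕ, ∀ xk ∈ C, hammingDist xi xk = w → hammingDist xj xk = l →
      condP p xi xj xk t = q l)
    (s : {c // c ∈ nbrs C xi w} ≃ Fin (nbrs C xi w).card)
    (hK : 1/2 < Kij p C xi xj w t hj s) :
    ∃ l ≤ n,
      (((C.filter fun c => hammingDist xi c = w ∧ hammingDist xj c = l).card : ℝ)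
          ≤ min ((nbrs C xi w).card : ℝ) ((nbrs C xj l).card : ℝ)) ∧
      1 / (2 * ((n : ℝ) + 1) * q l)
        < ((C.filter fun c => hammingDist xi c = w ∧ hammingDist xj c = l).card : ℝ) := by

  classical
  by_contra hcon
  push_neg at hcon
  have hp1 : 0 ≤ 1 - p := by linarith
  have hPx : ∀ Y : Finset (Fin n → ZMod 2), 0 ≤ Px p xi Y := by
    intro Y
    apply Finset.sum_nonneg
    intro y _
    positivity
  have hcond : ∀ xk : Fin n → ZMod 2, 0 ≤ condP p xi xj xk t := by
    intro xk
    exact div_nonneg (hPx _) (hPx _)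
  have h1 : Kij p C xi xj w t hj s ≤ ∑ k ∈ (nbrs C xi w).attach, condP p xi xj k.1 t := by
    apply Finset.sum_le_sum
    intro k _
    split
    · exact le_rfl
    · exact hcond _
  have h2 : ∑ k ∈ (nbrs C xi w).attach, condP p xi xj k.1 t
      = ∑ k ∈ nbrs C xi w, condP p xi xj k t :=
    Finset.sum_attach _ (fun k => condP p xi xj k t)
  have h3 : ∑ l ∈ Finset.range (n+1),
      ∑ k ∈ (nbrs C xi w).filter (fun c => hammingDist xj c = l), condP p xi xj k t
      = ∑ k ∈ nbrs C xi w, condP p xi xj k t := by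
    apply Finset.sum_fiberwise_of_maps_to
    intro c _
    simp only [Finset.mem_range]
    have := hammingDist_le_card_fintype (x := xj) (y := c)
    simpa using Nat.lt_succ_of_le (by simpa using this)
  have hfil : ∀ l : ℕ, (nbrs C xi w).filter (fun c => hammingDist xj c = l)
      = C.filter (fun c => hammingDist xi c = w ∧ hammingDist xj c = l) := by
    intro l
    simp [nbrs, Finset.filter_filter]
  have h4 : ∀ l : ℕ,
      ∑ k ∈ (nbrs C xi w).filter (fun c => hammingDist xj c = l), condP p xi xj k t
      = ((C.filter (fun c => hammingDist xi c = w ∧ hammingDist xj c = l)).card : ℝ) * q l := by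
    intro l
    rw [hfil l]
    rw [Finset.sum_congr rfl (fun c hc => ?_), Finset.sum_const, nsmul_eq_mul]
    simp only [Finset.mem_filter] at hc
    exact hq l c hc.1 hc.2.1 hc.2.2
  have hA : ∀ l : ℕ,
      (((C.filter fun c => hammingDist xi c = w ∧ hammingDist xj c = l).card : ℝ)
        ≤ min ((nbrs C xi w).card : ℝ) ((nbrs C xj l).card : ℝ)) := by
    intro l
    apply le_min
    · exact_mod_cast Finset.card_le_card (by
        intro c hc
        simp only [Finset.mem_filter, nbrs] at hc ⊢
        exact ⟨hc.1, hc.2.1⟩)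
    · exact_mod_cast Finset.card_le_card (by
        intro c hc
        simp only [Finset.mem_filter, nbrs] at hc ⊢
        exact ⟨hc.1, hc.2.2⟩)
  have h5 : ∀ l ∈ Finset.range (n+1),
      ((C.filter (fun c => hammingDist xi c = w ∧ hammingDist xj c = l)).card : ℝ) * q l
        ≤ 1 / (2 * ((n:ℝ) + 1)) := by
    intro l hl
    have hln : l ≤ n := Nat.lt_succ_iff.mp (Finset.mem_range.mp hl)
    set R := C.filter (fun c => hammingDist xi c = w ∧ hammingDist xj c = l) with hR
    have hpos : (0:ℝ) < 1 / (2 * ((n:ℝ) + 1)) := by positivity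
    rcases Nat.eq_zero_or_pos R.card with h0 | hRpos
    · rw [h0]; simpa using hpos.le
    · obtain ⟨c, hc⟩ := Finset.card_pos.mp hRpos
      simp only [hR, Finset.mem_filter] at hc
      have hqnn : 0 ≤ q l := (hq l c hc.1 hc.2.1 hc.2.2) ▸ hcond c
      rcases eq_or_lt_of_le hqnn with hq0 | hq0
      · rw [← hq0, mul_zero]; exact hpos.le
      · have hle := hcon l hln (hA l)
        have := mul_le_mul_of_nonneg_right hle hqnn
        calc (R.card : ℝ) * q l ≤ 1 / (2 * ((n:ℝ) + 1) * q l) * q l := this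
          _ = 1 / (2 * ((n:ℝ) + 1)) := by
              field_simp
  have h6 : ∑ l ∈ Finset.range (n+1), (1 : ℝ) / (2 * ((n:ℝ) + 1)) = 1/2 := by
    rw [Finset.sum_const, Finset.card_range, nsmul_eq_mul]
    have : ((n:ℝ) + 1) ≠ 0 := by positivity
    push_cast
    field_simp
  have hfinal : Kij p C xi xj w t hj s ≤ 1/2 := by
    calc Kij p C xi xj w t hj s ≤ ∑ k ∈ nbrs C xi w, condP p xi xj k t := h2 ▸ h1
      _ = ∑ l ∈ Finset.range (n+1),
            ∑ k ∈ (nbrs C xi w).filter (fun c => hammingDist xj c = l), condP p xi xj k t :=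
          h3.symm
      _ = ∑ l ∈ Finset.range (n+1),
            ((C.filter (fun c => hammingDist xi c = w ∧ hammingDist xj c = l)).card : ℝ) * q l := by
          exact Finset.sum_congr rfl (fun l _ => h4 l)
      _ ≤ ∑ l ∈ Finset.range (n+1), (1 : ℝ) / (2 * ((n:ℝ) + 1)) := Finset.sum_le_sum h5
      _ = 1/2 := h6
  linarith
end
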